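/- arXiv:2305.03490 — 5 statements merged into one kernel-verified Lean document; each statement's English description precedes it below -/
import Mathlib

section
/- Let a ∈ (0,1) and let f₁ : [0,a] → [0,1] be a C¹ expanding diffeomorphism (f₁' > 1, f₁(0)=0, f₁(a)=1). Then there exists a C¹ expanding diffeomorphism f₂ : [a,1] → [0,1] with f₂(a) = 0, f₂(1) = 1, such that the map f : [0,1] → [0,1] defined by f₁ on [0,a) and f₂ on [a,1] preserves Lebesgue measure. -/
open MeasureTheory Set

/-- Derivative of an inverse function within a set. -/
lemma aux_inv_hasDerivWithinAt {φ ψ : ℝ → ℝ} {s t : Set ℝ} {x d : ℝ}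
    (hx : x ∈ t) (hψs : MapsTo ψ t s) (hinv : ∀ y ∈ t, φ (ψ y) = y)
    (hψc : ContinuousWithinAt ψ t x)
    (hφ : HasDerivWithinAt φ d s (ψ x)) (hd : d ≠ 0) :
    HasDerivWithinAt ψ d⁻¹ t x := by
  rw [hasDerivWithinAt_iff_tendsto_slope]
  have h1 : Filter.Tendsto ψ (nhdsWithin x (t \ {x})) (nhdsWithin (ψ x) (s \ {ψ x})) := by
    rw [tendsto_nhdsWithin_iff]
    constructor
    · exact hψc.mono diff_subset
    · filter_upwards [self_mem_nhdsWithin] with y hy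
      refine ⟨hψs hy.1, fun h => hy.2 ?_⟩
      have : φ (ψ y) = φ (ψ x) := by rw [h]
      rw [hinv y hy.1, hinv x hx] at this
      simpa using this
  have h2 : Filter.Tendsto (fun y => (slope φ (ψ x) (ψ y))⁻¹)
      (nhdsWithin x (t \ {x})) (nhds d⁻¹) :=
    ((hasDerivWithinAt_iff_tendsto_slope.1 hφ).comp h1).inv₀ hd
  refine h2.congr' ?_
  filter_upwards [self_mem_nhdsWithin] with y hy
  rw [slope_def_field, slope_def_field, hinv y hy.1, hinv x hx, inv_div]

/-- Any C¹ expanding diffeomorphism `f₁ : [0,a] → [0,1]` admits a C¹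
expanding second branch `f₂ : [a,1] → [0,1]` with `f₂ a = 0`, `f₂ 1 = 1`, such that
the resulting full branch map preserves Lebesgue measure. -/
theorem stmt4 (a : ℝ) (ha : a ∈ Ioo (0:ℝ) 1)
    (f₁ f₁' : ℝ → ℝ)
    (hf₁d : ∀ x ∈ Icc (0:ℝ) a, HasDerivWithinAt f₁ (f₁' x) (Icc 0 a) x)
    (hf₁c : ContinuousOn f₁' (Icc 0 a))
    (hf₁e : ∀ x ∈ Icc (0:ℝ) a, 1 < f₁' x)
    (hf₁0 : f₁ 0 = 0) (hf₁a : f₁ a = 1) :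
    ∃ f₂ f₂' : ℝ → ℝ,
      (∀ x ∈ Icc a (1:ℝ), HasDerivWithinAt f₂ (f₂' x) (Icc a 1) x) ∧
      ContinuousOn f₂' (Icc a 1) ∧
      (∀ x ∈ Icc a (1:ℝ), 1 < f₂' x) ∧
      f₂ a = 0 ∧ f₂ 1 = 1 ∧
      Measure.map (fun x => if x < a then f₁ x else f₂ x) (volume.restrict (Icc (0:ℝ) 1))
        = volume.restrict (Icc (0:ℝ) 1) := by
  obtain ⟨ha0, ha1⟩ := ha
  -- define φ u = a + f₁ u - u, an increasing C¹ bijection [0,a] → [a,1]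
  set φ : ℝ → ℝ := fun u => a + f₁ u - u with hφdef
  have hφ0 : φ 0 = a := by simp [hφdef, hf₁0]
  have hφa : φ a = 1 := by simp [hφdef, hf₁a]
  have hφd : ∀ u ∈ Icc (0:ℝ) a, HasDerivWithinAt φ (f₁' u - 1) (Icc 0 a) u := fun u hu =>
    ((hf₁d u hu).const_add a).sub (hasDerivWithinAt_id u _)
  have hφc : ContinuousOn φ (Icc 0 a) := fun u hu => (hφd u hu).continuousWithinAt
  have hf₁cont : ContinuousOn f₁ (Icc 0 a) := fun u hu => (hf₁d u hu).continuousWithinAt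
  have hφmono : StrictMonoOn φ (Icc 0 a) := by
    refine strictMonoOn_of_deriv_pos (convex_Icc 0 a) hφc fun x hx => ?_
    rw [interior_Icc] at hx
    have hx' : x ∈ Icc (0:ℝ) a := Ioo_subset_Icc_self hx
    have : HasDerivAt φ (f₁' x - 1) x :=
      (hφd x hx').hasDerivAt (Icc_mem_nhds hx.1 hx.2)
    rw [this.deriv]
    linarith [hf₁e x hx']
  have hf₁mono : StrictMonoOn f₁ (Icc 0 a) := by
    refine strictMonoOn_of_deriv_pos (convex_Icc 0 a) hf₁cont fun x hx => ?_
    rw [interior_Icc] at hx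
    have hx' : x ∈ Icc (0:ℝ) a := Ioo_subset_Icc_self hx
    have : HasDerivAt f₁ (f₁' x) x :=
      (hf₁d x hx').hasDerivAt (Icc_mem_nhds hx.1 hx.2)
    rw [this.deriv]
    linarith [hf₁e x hx']
  have hφmaps : MapsTo φ (Icc 0 a) (Icc a 1) := by
    intro u hu
    constructor
    · calc a = φ 0 := hφ0.symm
        _ ≤ φ u := hφmono.monotoneOn (left_mem_Icc.2 ha0.le) hu hu.1
    · calc φ u ≤ φ a := hφmono.monotoneOn hu (right_mem_Icc.2 ha0.le) hu.2
        _ = 1 := hφa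
  have hsurj : Icc a 1 ⊆ φ '' Icc 0 a := by
    have h := intermediate_value_Icc ha0.le hφc
    rwa [hφ0, hφa] at h
  -- the inverse ψ of φ
  classical
  set ψ : ℝ → ℝ := fun y => if hy : y ∈ Icc a 1 then (hsurj hy).choose else 0 with hψdef
  have hψmem : ∀ y ∈ Icc a (1:ℝ), ψ y ∈ Icc (0:ℝ) a := by
    intro y hy; rw [hψdef]; simp only [dif_pos hy]; exact (hsurj hy).choose_spec.1
  have hψinv : ∀ y ∈ Icc a (1:ℝ), φ (ψ y) = y := by
    intro y hy; rw [hψdef]; simp only [dif_pos hy]; exact (hsurj hy).choose_spec.2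
  have hψφ : ∀ u ∈ Icc (0:ℝ) a, ψ (φ u) = u := by
    intro u hu
    have h1 : φ u ∈ Icc a 1 := hφmaps hu
    exact hφmono.injOn (hψmem _ h1) hu (hψinv _ h1)
  -- continuity of ψ via compactness
  have hψcont : ContinuousOn ψ (Icc a 1) := by
    let E : Icc (0:ℝ) a ≃ Icc a (1:ℝ) :=
      { toFun := fun u => ⟨φ u, hφmaps u.2⟩
        invFun := fun y => ⟨ψ y, hψmem y y.2⟩
        left_inv := fun u => Subtype.ext (hψφ u u.2)
        right_inv := fun y => Subtype.ext (hψinv y y.2) }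
    have hEc : Continuous E := Continuous.subtype_mk (hφc.restrict) _
    haveI : CompactSpace (Icc (0:ℝ) a) := isCompact_iff_compactSpace.1 isCompact_Icc
    let h := hEc.homeoOfEquivCompactToT2
    rw [continuousOn_iff_continuous_restrict]
    have : (Icc a (1:ℝ)).domRestrict ψ = fun y => ((h.symm y : Icc (0:ℝ) a) : ℝ) := by
      funext y; rfl
    rw [this]
    exact continuous_subtype_val.comp h.symm.continuous
  -- derivative of ψ
  have hψd : ∀ x ∈ Icc a (1:ℝ), HasDerivWithinAt ψ (f₁' (ψ x) - 1)⁻¹ (Icc a 1) x := by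
    intro x hx
    refine aux_inv_hasDerivWithinAt hx hψmem hψinv (hψcont x hx)
      (hφd (ψ x) (hψmem x hx)) ?_
    have := hf₁e (ψ x) (hψmem x hx); linarith
  -- define f₂
  refine ⟨fun x => f₁ (ψ x), fun x => f₁' (ψ x) / (f₁' (ψ x) - 1), ?_, ?_, ?_, ?_, ?_, ?_⟩
  · intro x hx
    have h := (hf₁d (ψ x) (hψmem x hx)).comp x (hψd x hx) hψmem
    simp only [div_eq_mul_inv]; exact h
  · refine ContinuousOn.div (hf₁c.comp hψcont hψmem) ((hf₁c.comp hψcont hψmem).sub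
      continuousOn_const) fun x hx => ?_
    have := hf₁e (ψ x) (hψmem x hx); intro h; linarith [sub_eq_zero.1 h]
  · intro x hx
    have h1 := hf₁e (ψ x) (hψmem x hx)
    rw [lt_div_iff₀ (by linarith)]; linarith
  · have h1 : (a:ℝ) ∈ Icc a (1:ℝ) := left_mem_Icc.2 ha1.le
    have : ψ a = 0 := by
      have := hψφ 0 (left_mem_Icc.2 ha0.le); rwa [hφ0] at this
    simp [this, hf₁0]
  · have : ψ 1 = a := by
      have := hψφ a (right_mem_Icc.2 ha0.le); rwa [hφa] at this
    simp [this, hf₁a]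
  -- measure preservation
  · set f : ℝ → ℝ := fun x => if x < a then f₁ x else f₁ (ψ x) with hfdef
    set μ : Measure ℝ := volume.restrict (Icc (0:ℝ) 1) with hμdef
    -- basic bounds
    have hf₁nonneg : ∀ u ∈ Icc (0:ℝ) a, 0 ≤ f₁ u := by
      intro u hu
      calc (0:ℝ) = f₁ 0 := hf₁0.symm
        _ ≤ f₁ u := hf₁mono.monotoneOn (left_mem_Icc.2 ha0.le) hu hu.1
    have hf₁le1 : ∀ u ∈ Icc (0:ℝ) a, f₁ u ≤ 1 := by
      intro u hu
      calc f₁ u ≤ f₁ a := hf₁mono.monotoneOn hu (right_mem_Icc.2 ha0.le) hu.2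
        _ = 1 := hf₁a
    have hIccsplit : Icc (0:ℝ) 1 = Ico 0 a ∪ Icc a 1 :=
      (Ico_union_Icc_eq_Icc ha0.le ha1.le).symm
    have hdisj : Disjoint (Ico (0:ℝ) a) (Icc a 1) := by
      rw [Set.disjoint_left]; rintro x ⟨_, hx2⟩ ⟨hx3, _⟩; exact absurd hx3 (not_le.2 hx2)
    -- a.e.-measurability of f
    have hfae : AEMeasurable f μ := by
      rw [hμdef, hIccsplit, Measure.restrict_union hdisj measurableSet_Icc,
        aemeasurable_add_measure_iff]
      constructor
      · refine AEMeasurable.congr ((hf₁cont.aemeasurable measurableSet_Icc).mono_measure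
          (Measure.restrict_mono Ico_subset_Icc_self le_rfl)) ?_
        rw [Filter.EventuallyEq, ae_restrict_iff' measurableSet_Ico]
        exact Filter.Eventually.of_forall fun x hx => by simp [hfdef, hx.2]
      · have hcont2 : ContinuousOn (fun x => f₁ (ψ x)) (Icc a 1) :=
          hf₁cont.comp hψcont hψmem
        refine AEMeasurable.congr (hcont2.aemeasurable measurableSet_Icc) ?_
        rw [Filter.EventuallyEq, ae_restrict_iff' measurableSet_Icc]
        exact Filter.Eventually.of_forall fun x hx => by
          simp [hfdef, not_lt.2 hx.1]
    haveI hμfin : IsFiniteMeasure μ := ⟨by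
      rw [hμdef, Measure.restrict_apply_univ, Real.volume_Icc]
      exact ENNReal.ofReal_lt_top⟩
    haveI : IsFiniteMeasure (μ.map f) := ⟨by
      rw [Measure.map_apply_of_aemeasurable hfae MeasurableSet.univ]
      exact measure_lt_top μ _⟩
    -- pointwise bounds on f
    have hf0 : ∀ x ∈ Icc (0:ℝ) 1, 0 ≤ f x := by
      intro x hx
      by_cases h : x < a
      · simpa [hfdef, h] using hf₁nonneg x ⟨hx.1, h.le⟩
      · simp only [hfdef, if_neg h]
        exact hf₁nonneg _ (hψmem x ⟨not_lt.1 h, hx.2⟩)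
    have hfle1 : ∀ x ∈ Icc (0:ℝ) 1, f x ≤ 1 := by
      intro x hx
      by_cases h : x < a
      · simpa [hfdef, h] using hf₁le1 x ⟨hx.1, h.le⟩
      · simp only [hfdef, if_neg h]
        exact hf₁le1 _ (hψmem x ⟨not_lt.1 h, hx.2⟩)
    refine Measure.ext_of_Iic (μ.map f) μ fun t => ?_
    rw [Measure.map_apply_of_aemeasurable hfae measurableSet_Iic, hμdef,
      Measure.restrict_apply' measurableSet_Icc, Measure.restrict_apply' measurableSet_Icc]
    rcases lt_or_ge t 0 with ht0 | ht0
    · have h1 : f ⁻¹' Iic t ∩ Icc 0 1 = (∅ : Set ℝ) := by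
        rw [eq_empty_iff_forall_notMem]
        rintro x ⟨hx1, hx2⟩
        rw [mem_preimage, mem_Iic] at hx1
        linarith [hf0 x hx2]
      have h2 : Iic t ∩ Icc 0 1 = (∅ : Set ℝ) := by
        rw [eq_empty_iff_forall_notMem]
        rintro x ⟨hx1, hx2⟩
        rw [mem_Iic] at hx1
        linarith [hx2.1]
      rw [h1, h2]
    rcases le_or_gt t 1 with ht1 | ht1
    · -- 0 ≤ t ≤ 1
      obtain ⟨u, hu, hut⟩ : ∃ u ∈ Icc (0:ℝ) a, f₁ u = t := by
        have h := intermediate_value_Icc ha0.le hf₁cont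
        rw [hf₁0, hf₁a] at h
        obtain ⟨u, hu, hut⟩ := h ⟨ht0, ht1⟩
        exact ⟨u, hu, hut⟩
      have hut' : u ≤ t := by
        have h := (hφmaps hu).1
        simp only [hφdef] at h
        linarith
      have hset : f ⁻¹' Iic t ∩ Icc 0 1 = (Icc 0 u ∩ Ico 0 a) ∪ Icc a (φ u) := by
        ext x
        simp only [mem_inter_iff, mem_preimage, mem_Iic, mem_Icc, mem_Ico, mem_union]
        constructor
        · rintro ⟨hx1, hx2, hx3⟩
          by_cases h : x < a
          · left
            refine ⟨⟨hx2, ?_⟩, hx2, h⟩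
            by_contra hc
            push_neg at hc
            have := hf₁mono hu ⟨hx2, h.le⟩ hc
            rw [hut] at this
            simp only [hfdef, if_pos h] at hx1
            linarith
          · right
            have hax : a ≤ x := not_lt.1 h
            refine ⟨hax, ?_⟩
            simp only [hfdef, if_neg h] at hx1
            have hψxu : ψ x ≤ u := by
              by_contra hc
              push_neg at hc
              have := hf₁mono hu (hψmem x ⟨hax, hx3⟩) hc
              rw [hut] at this
              linarith
            calc x = φ (ψ x) := (hψinv x ⟨hax, hx3⟩).symm
              _ ≤ φ u := hφmono.monotoneOn (hψmem x ⟨hax, hx3⟩) hu hψxu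
        · rintro (⟨⟨h0x, hxu⟩, _, hxa⟩ | ⟨hax, hxφ⟩)
          · refine ⟨?_, h0x, hxa.le.trans ha1.le⟩
            simp only [hfdef, if_pos hxa]
            rw [← hut]
            exact hf₁mono.monotoneOn ⟨h0x, hxa.le⟩ hu hxu
          · have hφu1 : φ u ≤ 1 := (hφmaps hu).2
            have hx1 : x ≤ 1 := hxφ.trans hφu1
            refine ⟨?_, ha0.le.trans hax, hx1⟩
            simp only [hfdef, if_neg (not_lt.2 hax)]
            have hψxu : ψ x ≤ u := by
              by_contra hc
              push_neg at hc
              have := hφmono hu (hψmem x ⟨hax, hx1⟩) hc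
              rw [hψinv x ⟨hax, hx1⟩] at this
              linarith
            rw [← hut]
            exact hf₁mono.monotoneOn (hψmem x ⟨hax, hx1⟩) hu hψxu
      have hdisj2 : Disjoint (Icc (0:ℝ) u ∩ Ico 0 a) (Icc a (φ u)) := by
        rw [Set.disjoint_left]
        rintro x ⟨_, _, hxa⟩ ⟨hax, _⟩
        exact absurd hax (not_le.2 hxa)
      have hvol1 : volume (Icc (0:ℝ) u ∩ Ico 0 a) = ENNReal.ofReal u := by
        apply le_antisymm
        · refine (measure_mono inter_subset_left).trans_eq ?_
          rw [Real.volume_Icc, sub_zero]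
        · have hsub : Ico (0:ℝ) u ⊆ Icc 0 u ∩ Ico 0 a := fun x hx =>
            ⟨⟨hx.1, hx.2.le⟩, hx.1, hx.2.trans_le hu.2⟩
          calc ENNReal.ofReal u = volume (Ico (0:ℝ) u) := by
                rw [Real.volume_Ico, sub_zero]
            _ ≤ _ := measure_mono hsub
      have hvol2 : volume (Icc a (φ u)) = ENNReal.ofReal (t - u) := by
        rw [Real.volume_Icc]
        congr 1
        simp only [hφdef]
        linarith
      have hrhs : Iic t ∩ Icc 0 1 = Icc (0:ℝ) t := by
        ext x
        simp only [mem_inter_iff, mem_Iic, mem_Icc]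
        exact ⟨fun ⟨h1, h2, _⟩ => ⟨h2, h1⟩, fun ⟨h1, h2⟩ => ⟨h2, h1, h2.trans ht1⟩⟩
      rw [hset, measure_union hdisj2 measurableSet_Icc, hvol1, hvol2, hrhs,
        Real.volume_Icc, sub_zero, ← ENNReal.ofReal_add hu.1 (by linarith)]
      congr 1
      ring
    · -- t > 1
      have h1 : f ⁻¹' Iic t ∩ Icc 0 1 = Icc (0:ℝ) 1 :=
        inter_eq_right.2 fun x hx => by
          rw [mem_preimage, mem_Iic]
          exact (hfle1 x hx).trans ht1.le
      have h2 : Iic t ∩ Icc 0 1 = Icc (0:ℝ) 1 :=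
        inter_eq_right.2 fun x hx => hx.2.trans ht1.le
      rw [h1, h2]
end

section
/- Let a ∈ (0,1), f₁ : [0,a] → [0,1] a C¹ expanding diffeomorphism with f₁(0)=0, f₁(a)=1, and let f₂ : [a,1] → [0,1] be a C¹ solution of f₂'(x) = f₁'(f₁⁻¹(f₂(x)))/(f₁'(f₁⁻¹(f₂(x))) − 1), f₂(a) = 0, such that the resulting two-branch map preserves Lebesgue measure. Then f₂(1) = 1. -/
/-!
The branch `f₂` is increasing, since the ODE makes `f₂' = f₁'/(f₁' - 1) > 0`. If `b = f₂ 1 < 1`,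
then `f₂` never enters `(b, 1]`, so the preimage of `(b, 1]` is `(c, a)` with `c = f₁⁻¹ b`, of
length `a - c`. Since `f₁' > 1`, `f₁ x - x` is strictly increasing, which gives
`a - c < f₁ a - f₁ c = 1 - b`, contradicting invariance of Lebesgue measure.
-/

open MeasureTheory Set

lemma strictMonoOn_of_forall_hasDerivWithinAt_pos {D : Set ℝ} (hD : Convex ℝ D)
    {f f' : ℝ → ℝ} (hf : ∀ x ∈ D, HasDerivWithinAt f (f' x) D x)
    (hf' : ∀ x ∈ interior D, 0 < f' x) : StrictMonoOn f D :=
  strictMonoOn_of_hasDerivWithinAt_pos hD (fun x hx ↦ (hf x hx).continuousWithinAt)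
    (fun x hx ↦ (hf x (interior_subset hx)).mono interior_subset) hf'

lemma sub_lt_image_sub_of_one_lt_deriv {f f' : ℝ → ℝ} {p q : ℝ}
    (hf : ∀ x ∈ Icc p q, HasDerivWithinAt f (f' x) (Icc p q) x) (hf' : ∀ x ∈ Icc p q, 1 < f' x)
    {x y : ℝ} (hx : x ∈ Icc p q) (hy : y ∈ Icc p q) (hxy : x < y) : y - x < f y - f x := by
  have hmono : StrictMonoOn (fun x ↦ f x - x) (Icc p q) :=
    strictMonoOn_of_forall_hasDerivWithinAt_pos (convex_Icc p q)
      (fun x hx ↦ (hf x hx).sub (hasDerivWithinAt_id x _))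
      fun x hx ↦ sub_pos.2 (hf' x (interior_subset hx))
  linarith [hmono hx hy hxy]

lemma piecewise_preimage_Ioc_inter_Icc {f₁ f₂ : ℝ → ℝ} {a b c : ℝ}
    (hf₁ : StrictMonoOn f₁ (Icc 0 a)) (hc : c ∈ Icc 0 a) (hfc : f₁ c = b) (hfa : f₁ a ≤ 1)
    (ha : a ≤ 1) (hf₂ : ∀ x ∈ Icc a 1, f₂ x ≤ b) :
    (fun x ↦ if x < a then f₁ x else f₂ x) ⁻¹' Ioc b 1 ∩ Icc 0 1 = Ioo c a := by
  have ha₀ : a ∈ Icc 0 a := ⟨hc.1.trans hc.2, le_rfl⟩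
  ext x
  simp only [mem_inter_iff, mem_preimage, mem_Ioc, mem_Icc, mem_Ioo]
  constructor
  · rintro ⟨hTx, hx0, hx1⟩
    by_cases hxa : x < a
    · rw [if_pos hxa, ← hfc] at hTx
      exact ⟨(hf₁.lt_iff_lt hc ⟨hx0, hxa.le⟩).1 hTx.1, hxa⟩
    · rw [if_neg hxa] at hTx
      exact absurd (hf₂ x ⟨not_lt.1 hxa, hx1⟩) (not_le.2 hTx.1)
  · rintro ⟨hcx, hxa⟩
    have hx : x ∈ Icc 0 a := ⟨hc.1.trans hcx.le, hxa.le⟩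
    refine ⟨?_, hx.1, hxa.le.trans ha⟩
    rw [if_pos hxa]
    exact ⟨hfc ▸ hf₁ hc hx hcx, (hf₁.monotoneOn hx ha₀ hxa.le).trans hfa⟩

theorem stmt6_general (a : ℝ) (ha : a ∈ Ioo (0:ℝ) 1)
    (f₁ f₁' g₁ f₂ f₂' : ℝ → ℝ)
    (hf₁d : ∀ x ∈ Icc (0:ℝ) a, HasDerivWithinAt f₁ (f₁' x) (Icc 0 a) x)
    (hf₁e : ∀ x ∈ Icc (0:ℝ) a, 1 < f₁' x)
    (hf₁a : f₁ a = 1)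
    (hg₁' : ∀ y ∈ Icc (0:ℝ) 1, g₁ y ∈ Icc 0 a ∧ f₁ (g₁ y) = y)
    (hf₂d : ∀ x ∈ Icc a (1:ℝ), HasDerivWithinAt f₂ (f₂' x) (Icc a 1) x)
    (hf₂mem : ∀ x ∈ Icc a (1:ℝ), f₂ x ∈ Icc (0:ℝ) 1)
    (hODE : ∀ x ∈ Icc a (1:ℝ),
      f₂' x = f₁' (g₁ (f₂ x)) / (f₁' (g₁ (f₂ x)) - 1))
    (hpres : Measure.map (fun x => if x < a then f₁ x else f₂ x)
        (volume.restrict (Icc (0:ℝ) 1)) = volume.restrict (Icc (0:ℝ) 1)) :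
    f₂ 1 = 1 := by
  obtain ⟨ha0, ha1⟩ := ha
  have hf₁ : StrictMonoOn f₁ (Icc 0 a) :=
    strictMonoOn_of_forall_hasDerivWithinAt_pos (convex_Icc 0 a) hf₁d
      fun x hx ↦ one_pos.trans (hf₁e x (interior_subset hx))
  have hf₂ : MonotoneOn f₂ (Icc a 1) := by
    refine (strictMonoOn_of_forall_hasDerivWithinAt_pos (convex_Icc a 1) hf₂d
      fun x hx ↦ ?_).monotoneOn
    have hx := interior_subset hx
    have h1 := hf₁e _ (hg₁' _ (hf₂mem x hx)).1
    rw [hODE x hx]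
    exact div_pos (one_pos.trans h1) (sub_pos.2 h1)
  set b := f₂ 1
  have hb : b ∈ Icc (0:ℝ) 1 := hf₂mem 1 ⟨ha1.le, le_rfl⟩
  by_contra hb1
  obtain ⟨hc, hfc⟩ := hg₁' b hb
  have hca : g₁ b < a := hc.2.lt_of_ne fun h ↦ hb1 (by rw [← hfc, h, hf₁a])
  have hpre := piecewise_preimage_Ioc_inter_Icc hf₁ hc hfc hf₁a.le ha1.le
    fun x hx ↦ hf₂ hx ⟨ha1.le, le_rfl⟩ hx.2
  have hvol := Measure.measure_preimage_of_map_eq_self hpres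
    (measurableSet_Ioc (a := b) (b := 1)).nullMeasurableSet
  rw [Measure.restrict_apply' measurableSet_Icc, Measure.restrict_apply' measurableSet_Icc,
    hpre, inter_eq_self_of_subset_left (Ioc_subset_Icc_self.trans (Icc_subset_Icc_left hb.1)),
    Real.volume_Ioo, Real.volume_Ioc,
    ENNReal.ofReal_eq_ofReal_iff (by linarith) (by linarith [hb.2])] at hvol
  have hstretch := sub_lt_image_sub_of_one_lt_deriv hf₁d hf₁e hc ⟨ha0.le, le_rfl⟩ hca
  rw [hfc, hf₁a] at hstretch
  linarith

/-- If `f₂` solves the transfer-operator ODE with `f₂ a = 0`, takes values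
in `[0,1]`, and the resulting two-branch map preserves Lebesgue measure, then `f₂ 1 = 1`. -/
theorem stmt6 (a : ℝ) (ha : a ∈ Ioo (0:ℝ) 1)
    (f₁ f₁' g₁ f₂ f₂' : ℝ → ℝ)
    (hf₁d : ∀ x ∈ Icc (0:ℝ) a, HasDerivWithinAt f₁ (f₁' x) (Icc 0 a) x)
    (hf₁e : ∀ x ∈ Icc (0:ℝ) a, 1 < f₁' x)
    (hf₁0 : f₁ 0 = 0) (hf₁a : f₁ a = 1)
    (hg₁ : ∀ x ∈ Icc (0:ℝ) a, g₁ (f₁ x) = x)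
    (hg₁' : ∀ y ∈ Icc (0:ℝ) 1, g₁ y ∈ Icc 0 a ∧ f₁ (g₁ y) = y)
    (hf₂d : ∀ x ∈ Icc a (1:ℝ), HasDerivWithinAt f₂ (f₂' x) (Icc a 1) x)
    (hf₂a : f₂ a = 0)
    (hf₂mem : ∀ x ∈ Icc a (1:ℝ), f₂ x ∈ Icc (0:ℝ) 1)
    (hODE : ∀ x ∈ Icc a (1:ℝ),
      f₂' x = f₁' (g₁ (f₂ x)) / (f₁' (g₁ (f₂ x)) - 1))
    (hpres : Measure.map (fun x => if x < a then f₁ x else f₂ x)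
        (volume.restrict (Icc (0:ℝ) 1)) = volume.restrict (Icc (0:ℝ) 1)) :
    f₂ 1 = 1 :=
  stmt6_general a ha f₁ f₁' g₁ f₂ f₂' hf₁d hf₁e hf₁a hg₁' hf₂d hf₂mem hODE hpres
end

section
/- Let a ∈ (0,1), f₁ : [0,a] → [0,1] a C¹ expanding diffeomorphism with f₁(0)=0, f₁(a)=1, and let f : [0,1] → [0,1] be its unique Lebesgue-preserving full-branch extension with second branch f₂ : [a,1] → [0,1]. Then the induced degree-2 circle map (obtained by identifying 0 ∼ 1) is C¹ if and only if f₁'(0) = f₁'(a)/(f₁'(a) − 1). -/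
/-!
By the ODE for the second branch, `f₂'(a) = φ (f₁' 0)` and `f₂'(1) = φ (f₁' a)` with
`φ t = t / (t - 1)`. Since `φ` is an involution away from `t = 1`, each of the two matching
conditions `f₂'(a) = f₁'(a)` and `f₂'(1) = f₁'(0)` is equivalent to `f₁'(0) = φ (f₁'(a))`.
-/

open MeasureTheory Set

lemma div_sub_one_div_sub_one {t : ℝ} (ht : t ≠ 1) :
    t / (t - 1) / (t / (t - 1) - 1) = t := by
  have ht' : t - 1 ≠ 0 := sub_ne_zero.mpr ht
  field_simp
  ring

lemma eq_div_sub_one_comm {s t : ℝ} (hs : s ≠ 1) (ht : t ≠ 1) :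
    s = t / (t - 1) ↔ t = s / (s - 1) := by
  constructor
  · rintro rfl
    exact (div_sub_one_div_sub_one ht).symm
  · rintro rfl
    exact (div_sub_one_div_sub_one hs).symm

theorem stmt8_general (a : ℝ) (ha : a ∈ Ioo (0:ℝ) 1)
    (f₁ f₁' g₁ f₂ f₂' : ℝ → ℝ)
    (hf₁e : ∀ x ∈ Icc (0:ℝ) a, 1 < f₁' x)
    (hf₁0 : f₁ 0 = 0) (hf₁a : f₁ a = 1)
    (hg₁ : ∀ x ∈ Icc (0:ℝ) a, g₁ (f₁ x) = x)
    (hf₂a : f₂ a = 0) (hf₂1 : f₂ 1 = 1)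
    (hODE : ∀ x ∈ Icc a (1:ℝ),
      f₂' x = f₁' (g₁ (f₂ x)) / (f₁' (g₁ (f₂ x)) - 1)) :
    (f₂' a = f₁' a ∧ f₂' 1 = f₁' 0) ↔ f₁' 0 = f₁' a / (f₁' a - 1) := by
  have h0 : (0:ℝ) ∈ Icc 0 a := ⟨le_rfl, ha.1.le⟩
  have ha' : a ∈ Icc 0 a := ⟨ha.1.le, le_rfl⟩
  have hg₁0 : g₁ 0 = 0 := by simpa only [hf₁0] using hg₁ 0 h0
  have hg₁1 : g₁ 1 = a := by simpa only [hf₁a] using hg₁ a ha'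
  have hf₂'a : f₂' a = f₁' 0 / (f₁' 0 - 1) := by
    simpa only [hf₂a, hg₁0] using hODE a ⟨le_rfl, ha.2.le⟩
  have hf₂'1 : f₂' 1 = f₁' a / (f₁' a - 1) := by
    simpa only [hf₂1, hg₁1] using hODE 1 ⟨ha.2.le, le_rfl⟩
  have hcomm := eq_div_sub_one_comm (hf₁e 0 h0).ne' (hf₁e a ha').ne'
  rw [hf₂'a, hf₂'1, eq_comm (b := f₁' a), ← hcomm, eq_comm (b := f₁' 0), and_self]

/-- The Lebesgue-preserving full-branch extension of
`f₁ : [0,a] → [0,1]` induces a C¹ degree-2 circle map (i.e. the one-sided derivatives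
match at the branch point `a` and at `0 ∼ 1`) iff `f₁'(0) = f₁'(a)/(f₁'(a) − 1)`. -/
theorem stmt8 (a : ℝ) (ha : a ∈ Ioo (0:ℝ) 1)
    (f₁ f₁' g₁ f₂ f₂' : ℝ → ℝ)
    (hf₁d : ∀ x ∈ Icc (0:ℝ) a, HasDerivWithinAt f₁ (f₁' x) (Icc 0 a) x)
    (hf₁c : ContinuousOn f₁' (Icc 0 a))
    (hf₁e : ∀ x ∈ Icc (0:ℝ) a, 1 < f₁' x)
    (hf₁0 : f₁ 0 = 0) (hf₁a : f₁ a = 1)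
    (hg₁ : ∀ x ∈ Icc (0:ℝ) a, g₁ (f₁ x) = x)
    (hg₁' : ∀ y ∈ Icc (0:ℝ) 1, g₁ y ∈ Icc 0 a ∧ f₁ (g₁ y) = y)
    (hf₂d : ∀ x ∈ Icc a (1:ℝ), HasDerivWithinAt f₂ (f₂' x) (Icc a 1) x)
    (hf₂c : ContinuousOn f₂' (Icc a 1))
    (hf₂a : f₂ a = 0) (hf₂1 : f₂ 1 = 1)
    (hODE : ∀ x ∈ Icc a (1:ℝ),
      f₂' x = f₁' (g₁ (f₂ x)) / (f₁' (g₁ (f₂ x)) - 1))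
    (hpres : Measure.map (fun x => if x < a then f₁ x else f₂ x)
        (volume.restrict (Icc (0:ℝ) 1)) = volume.restrict (Icc (0:ℝ) 1)) :
    (f₂' a = f₁' a ∧ f₂' 1 = f₁' 0) ↔ f₁' 0 = f₁' a / (f₁' a - 1) :=
  stmt8_general a ha f₁ f₁' g₁ f₂ f₂' hf₁e hf₁0 hf₁a hg₁ hf₂a hf₂1 hODE
end

section
/- The space Λ_Leb of C¹ orientation-preserving uniformly expanding degree-2 circle maps preserving Lebesgue measure, endowed with the C¹ topology, is path-connected. -/
open MeasureTheory

namespace Stmt12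

/-- Lifts of elements of `Λ_Leb`: pairs `(F, F')` where `F` is a lift of a C¹
orientation-preserving uniformly expanding degree-2 circle map preserving Lebesgue
(Haar) measure, and `F'` its derivative. -/
def LiftCond (p : C(ℝ, ℝ) × C(ℝ, ℝ)) : Prop :=
  ContDiff ℝ 1 p.1 ∧ (∀ x, deriv p.1 x = p.2 x) ∧
  (∃ l : ℝ, 1 < l ∧ ∀ x, l ≤ p.2 x) ∧
  (∀ x, p.1 (x + 1) = p.1 x + 2) ∧
  ∀ g : UnitAddCircle → UnitAddCircle,
    (∀ x : ℝ, g (x : UnitAddCircle) = ((p.1 x : ℝ) : UnitAddCircle)) →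
      Measure.map g volume = volume

def LiftSpace := {p : C(ℝ, ℝ) × C(ℝ, ℝ) // LiftCond p}

instance : TopologicalSpace LiftSpace :=
  inferInstanceAs (TopologicalSpace {p : C(ℝ, ℝ) × C(ℝ, ℝ) // LiftCond p})

/-- Two lifts represent the same circle map iff they differ by an integer. -/
def liftSetoid : Setoid LiftSpace where
  r p q := ∃ n : ℤ, (∀ x, q.1.1 x = p.1.1 x + n) ∧ ∀ x, q.1.2 x = p.1.2 x
  iseqv := by
    refine ⟨fun p => ⟨0, fun x => by simp, fun x => rfl⟩, ?_, ?_⟩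
    · rintro p q ⟨n, h1, h2⟩
      exact ⟨-n, fun x => by have := h1 x; push_cast; linarith, fun x => (h2 x).symm⟩
    · rintro p q r ⟨n, h1, h2⟩ ⟨m, g1, g2⟩
      exact ⟨n + m, fun x => by have := h1 x; have := g1 x; push_cast; linarith,
        fun x => (g2 x).trans (h2 x)⟩

/-- The space `Λ_Leb` with the C¹ topology. -/
def LambdaLeb := Quotient liftSetoid

instance : TopologicalSpace LambdaLeb :=
  inferInstanceAs (TopologicalSpace (Quotient liftSetoid))


noncomputable section
open Set intervalIntegral Function
open scoped ENNReal NNReal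


/-- The exponential `x ↦ e^{2πinx}` on `ℝ`. -/
def phi (n : ℤ) (x : ℝ) : ℂ := Complex.exp (2 * Real.pi * Complex.I * n * x)

lemma phi_eq (n : ℤ) (x : ℝ) : (fourier n ((x : ℝ) : UnitAddCircle) : ℂ) = phi n x := by
  rw [fourier_coe_apply]; norm_num [phi]

lemma continuous_phi (n : ℤ) : Continuous (phi n) :=
  Complex.continuous_exp.comp (by continuity)

lemma phi_periodic (n : ℤ) : Function.Periodic (phi n) 1 := by
  intro x
  simp only [phi]
  push_cast
  rw [show 2 * (Real.pi:ℂ) * Complex.I * n * (x + 1)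
      = 2 * (Real.pi:ℂ) * Complex.I * n * x + n * (2 * Real.pi * Complex.I) by push_cast; ring,
    Complex.exp_add, Complex.exp_int_mul_two_pi_mul_I, mul_one]

lemma integral_phi {n : ℤ} (hn : n ≠ 0) : ∫ x in (0:ℝ)..1, phi n x = 0 := by
  have hc : (2 * (Real.pi:ℂ) * Complex.I * n) ≠ 0 := by
    simp [Complex.I_ne_zero, Real.pi_ne_zero, hn]
  have := integral_exp_mul_complex (a := (0:ℝ)) (b := 1) hc
  simp only [phi]
  rw [this]
  simp [show 2 * (Real.pi:ℂ) * Complex.I * n * 1 = n * (2 * Real.pi * Complex.I) by ring,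
    Complex.exp_int_mul_two_pi_mul_I]

section Meas

variable {F : ℝ → ℝ}

lemma coe_add_int (a : ℝ) (m : ℤ) : ((a + m : ℝ) : UnitAddCircle) = (a : UnitAddCircle) := by
  rw [QuotientAddGroup.eq_iff_sub_mem]
  exact AddSubgroup.mem_zmultiples_iff.mpr ⟨m, by simp⟩

lemma hadd_int (hadd : ∀ x, F (x + 1) = F x + 2) (x : ℝ) (n : ℤ) : F (x + n) = F x + 2 * n := by
  have P : Function.Periodic (fun x => F x - 2 * x) 1 := by
    intro y; have := hadd y; simp only []; linarith
  have := (P.int_mul n) x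
  simp only [mul_one] at this
  linarith

lemma mk_F_eq (hadd : ∀ x, F (x + 1) = F x + 2) {x y : ℝ}
    (h : ((x : ℝ) : UnitAddCircle) = (y : UnitAddCircle)) :
    ((F x : ℝ) : UnitAddCircle) = ((F y : ℝ) : UnitAddCircle) := by
  rw [QuotientAddGroup.eq_iff_sub_mem] at h
  obtain ⟨m, hm⟩ := AddSubgroup.mem_zmultiples_iff.mp h
  rw [zsmul_eq_mul, mul_one] at hm
  have hy : x = y + m := by linarith
  rw [hy, hadd_int hadd]
  rw [show F y + 2 * (m:ℤ) = F y + ((2*m : ℤ) : ℝ) by push_cast; ring]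
  exact coe_add_int (F y) (2*m)

/-- Canonical measurable representative of the induced circle map. -/
def gmap (F : ℝ → ℝ) : UnitAddCircle → UnitAddCircle :=
  fun z => ((F ((AddCircle.equivIco 1 0 z : ℝ)) : ℝ) : UnitAddCircle)

lemma gmap_spec (hadd : ∀ x, F (x + 1) = F x + 2) (x : ℝ) :
    gmap F (x : UnitAddCircle) = ((F x : ℝ) : UnitAddCircle) :=
  mk_F_eq hadd ((AddCircle.equivIco 1 0).symm_apply_apply (x : UnitAddCircle))

lemma gmap_measurable (contF : Continuous F) : Measurable (gmap F) :=
  (AddCircle.measurable_mk'.comp (contF.measurable.comp measurable_subtype_coe)).comp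
    (AddCircle.measurableEquivIco 1 0).measurable

variable {E : Type*} [NormedAddCommGroup E] [NormedSpace ℝ E]

lemma integral_gmap (contF : Continuous F) (hadd : ∀ x, F (x + 1) = F x + 2)
    (f : UnitAddCircle → E) (hf : Continuous f) :
    ∫ z, f z ∂(Measure.map (gmap F) volume) = ∫ x in (0:ℝ)..1, f ((F x : ℝ) : UnitAddCircle) := by
  rw [integral_map (gmap_measurable contF).aemeasurable hf.aestronglyMeasurable,
    ← UnitAddCircle.integral_preimage 0 (fun z => f (gmap F z)),
    intervalIntegral.integral_of_le (by norm_num : (0:ℝ) ≤ 1)]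
  norm_num
  exact setIntegral_congr_fun measurableSet_Ioc fun x _ => by rw [gmap_spec hadd]

lemma integral_circ (f : UnitAddCircle → E) :
    ∫ z, f z ∂(volume : Measure UnitAddCircle) = ∫ x in (0:ℝ)..1, f ((x : ℝ) : UnitAddCircle) := by
  rw [← UnitAddCircle.intervalIntegral_preimage 0 f]
  norm_num

lemma gmap_mass (contF : Continuous F) :
    (Measure.map (gmap F) volume) univ = 1 := by
  rw [Measure.map_apply (gmap_measurable contF) MeasurableSet.univ]
  simpa using UnitAddCircle.measure_univ

end Meas


lemma phi_zero (x : ℝ) : phi 0 x = 1 := by simp [phi]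

section Meas
variable {F : ℝ → ℝ}

lemma cont_intfun (ν : Measure UnitAddCircle) [IsFiniteMeasure ν] :
    Continuous fun ψ : C(UnitAddCircle, ℂ) => ∫ z, ψ z ∂ν := by
  refine (LipschitzWith.of_dist_le_mul (K := (ν univ).toNNReal) ?_).continuous
  intro χ ψ
  have hint : ∀ γ : C(UnitAddCircle, ℂ), Integrable (fun z => γ z) ν := fun γ =>
    γ.continuous.integrable_of_hasCompactSupport (HasCompactSupport.of_compactSpace _)
  rw [dist_eq_norm, ← integral_sub (hint χ) (hint ψ)]
  calc ‖∫ z, (χ z - ψ z) ∂ν‖ ≤ dist χ ψ * (ν univ).toReal :=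
        norm_integral_le_of_norm_le_const (Filter.Eventually.of_forall fun z => by
          rw [← dist_eq_norm]; exact ContinuousMap.dist_apply_le_dist z)
    _ = ↑(ν univ).toNNReal * dist χ ψ := by
        rw [mul_comm]; rfl

theorem map_gmap_volume (contF : Continuous F) (hadd : ∀ x, F (x + 1) = F x + 2)
    (spec : ∀ n : ℤ, n ≠ 0 → ∫ x in (0:ℝ)..1, phi n (F x) = 0) :
    Measure.map (gmap F) volume = volume := by
  set μ := Measure.map (gmap F) volume with hμ
  have hfin : IsFiniteMeasure μ :=
    ⟨by rw [hμ, gmap_mass contF]; exact ENNReal.one_lt_top⟩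
  have hfour : ∀ n : ℤ, ∫ z, fourier n z ∂μ = ∫ z, fourier n z ∂(volume : Measure UnitAddCircle) := by
    intro n
    rw [hμ, integral_gmap contF hadd _ (fourier n).continuous, integral_circ]
    simp_rw [phi_eq]
    rcases eq_or_ne n 0 with rfl | hn
    · simp [phi_zero]
    · rw [spec n hn, integral_phi hn]
  have key : ∀ φ : C(UnitAddCircle, ℂ), ∫ z, φ z ∂μ = ∫ z, φ z ∂(volume : Measure UnitAddCircle) := by
    intro φ
    set S : Set C(UnitAddCircle, ℂ) :=
      {ψ | ∫ z, ψ z ∂μ = ∫ z, ψ z ∂(volume : Measure UnitAddCircle)} with hSdef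
    have hS : IsClosed S := isClosed_eq (cont_intfun μ) (cont_intfun volume)
    have hsub : (Submodule.span ℂ (Set.range (@fourier 1)) : Set C(UnitAddCircle, ℂ)) ⊆ S := by
      intro ψ hψ
      induction hψ using Submodule.span_induction with
      | mem ψ h => obtain ⟨n, rfl⟩ := h; exact hfour n
      | zero => simp [hSdef]
      | add ψ χ _ _ h1 h2 =>
          have hi : ∀ (ν : Measure UnitAddCircle) [IsFiniteMeasure ν]
              (γ : C(UnitAddCircle, ℂ)), Integrable (fun z => γ z) ν := fun ν _ γ =>
            γ.continuous.integrable_of_hasCompactSupport (HasCompactSupport.of_compactSpace _)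
          simp only [hSdef, mem_setOf_eq, ContinuousMap.add_apply] at h1 h2 ⊢
          rw [integral_add (hi μ ψ) (hi μ χ), integral_add (hi volume ψ) (hi volume χ), h1, h2]
      | smul c ψ _ h1 =>
          simp only [hSdef, mem_setOf_eq, ContinuousMap.smul_apply, smul_eq_mul] at h1 ⊢
          rw [MeasureTheory.integral_const_mul, MeasureTheory.integral_const_mul, h1]
    have hφ : φ ∈ closure (Submodule.span ℂ (Set.range (@fourier 1)) : Set C(UnitAddCircle, ℂ)) := by
      have := span_fourier_closure_eq_top (T := 1)
      have : φ ∈ (Submodule.span ℂ (Set.range (@fourier 1))).topologicalClosure := by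
        rw [this]; trivial
      rwa [← SetLike.mem_coe, Submodule.topologicalClosure_coe] at this
    exact closure_minimal hsub hS hφ
  apply ext_of_forall_lintegral_eq_of_IsFiniteMeasure
  intro f
  have h1 : (∫⁻ x, (f x : ℝ≥0∞) ∂μ) ≠ ⊤ := (f.lintegral_lt_top_of_nnreal μ).ne
  have h2 : (∫⁻ x, (f x : ℝ≥0∞) ∂(volume : Measure UnitAddCircle)) ≠ ⊤ :=
    (f.lintegral_lt_top_of_nnreal _).ne
  rw [← ENNReal.toReal_eq_toReal_iff' h1 h2,
    BoundedContinuousFunction.toReal_lintegral_coe_eq_integral,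
    BoundedContinuousFunction.toReal_lintegral_coe_eq_integral]
  have := key ⟨fun z => ((f z : ℝ) : ℂ), by continuity⟩
  simp only [ContinuousMap.coe_mk] at this
  
  have hgint : ∀ (ν : Measure UnitAddCircle) [IsFiniteMeasure ν],
      Integrable (fun z => ((f z : ℝ) : ℂ)) ν := fun ν _ =>
    (Complex.continuous_ofReal.comp (NNReal.continuous_coe.comp
      f.continuous)).integrable_of_hasCompactSupport (HasCompactSupport.of_compactSpace _)
  have h3 := congrArg Complex.re this
  rw [← RCLike.re_eq_complex_re, ← _root_.integral_re (hgint μ),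
    ← _root_.integral_re (hgint volume)] at h3
  simpa [RCLike.re_to_complex] using h3

theorem measure_cond (contF : Continuous F) (hadd : ∀ x, F (x + 1) = F x + 2)
    (spec : ∀ n : ℤ, n ≠ 0 → ∫ x in (0:ℝ)..1, phi n (F x) = 0) :
    ∀ g : UnitAddCircle → UnitAddCircle,
      (∀ x : ℝ, g (x : UnitAddCircle) = ((F x : ℝ) : UnitAddCircle)) →
        Measure.map g volume = volume := by
  intro g hg
  have : g = gmap F := by
    funext z
    obtain ⟨x, rfl⟩ := QuotientAddGroup.mk_surjective z
    rw [hg x, gmap_spec hadd]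
  rw [this]
  exact map_gmap_volume contF hadd spec
end Meas

/-- If a function has derivative everywhere `≥ c ≥ 0`, it expands gaps by factor `c`. -/
lemma expand_gap {f f' : ℝ → ℝ} (hd : ∀ x, HasDerivAt f (f' x) x) {c : ℝ} (hc0 : 0 ≤ c)
    (hc : ∀ x, c ≤ f' x) (a b : ℝ) : c * |a - b| ≤ |f a - f b| := by
  have hmono : Monotone fun x => f x - c * x := by
    apply monotone_of_deriv_nonneg
    · exact fun x => ((hd x).sub ((hasDerivAt_id x).const_mul c)).differentiableAt
    · intro x
      have hdx : HasDerivAt (fun x => f x - c * x) (f' x - c * 1) x :=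
        (hd x).sub ((hasDerivAt_id x).const_mul c)
      rw [hdx.deriv]
      have := hc x; linarith
  have hfm : Monotone f := by
    apply monotone_of_deriv_nonneg
    · exact fun x => (hd x).differentiableAt
    · intro x; rw [(hd x).deriv]; linarith [hc x]
  rcases le_total a b with hab | hab
  · have h1 := hmono hab
    rw [abs_of_nonpos (by linarith), abs_of_nonpos (by linarith [hfm hab])]
    simp only at h1; nlinarith
  · have h1 := hmono hab
    rw [abs_of_nonneg (by linarith), abs_of_nonneg (by linarith [hfm hab])]
    simp only at h1; nlinarith

lemma cont_of_gap {g : ℝ → ℝ} {c : ℝ} (hc : 0 < c) (h : ∀ a b, c * |g a - g b| ≤ |a - b|) :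
    Continuous g := by
  refine (LipschitzWith.of_dist_le_mul (K := Real.toNNReal c⁻¹) ?_).continuous
  intro a b
  rw [Real.dist_eq, Real.dist_eq, Real.coe_toNNReal _ (inv_nonneg.mpr hc.le)]
  have := h a b
  rw [mul_comm, ← le_div_iff₀ hc] at this
  calc |g a - g b| ≤ |a - b| / c := this
    _ = c⁻¹ * |a - b| := by field_simp

lemma add_int' {f : ℝ → ℝ} {d : ℝ} (h : ∀ x, f (x + 1) = f x + d) (x : ℝ) (n : ℤ) :
    f (x + n) = f x + d * n := by
  have P : Function.Periodic (fun x => f x - d * x) 1 := by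
    intro y; have := h y; simp only []; linarith
  have := (P.int_mul n) x
  simp only [mul_one] at this
  linarith

lemma surj_aux {f : ℝ → ℝ} (hc : Continuous f) (hm : Monotone f) {d : ℝ} (hd : 0 < d)
    (h : ∀ x, f (x + 1) = f x + d) : Function.Surjective f := by
  intro b
  obtain ⟨n, hn⟩ := exists_nat_ge (max ((b - f 0) / d) ((f 0 - b) / d))
  have h1 : f (0 + ((n : ℤ) : ℝ)) = f 0 + d * n := by exact_mod_cast add_int' h 0 (n : ℤ)
  have h2 : f (0 + ((-n : ℤ) : ℝ)) = f 0 + d * (-n : ℤ) := add_int' h 0 (-n : ℤ)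
  have hmax1 : (b - f 0) / d ≤ n := le_trans (le_max_left _ _) hn
  have hmax2 : (f 0 - b) / d ≤ n := le_trans (le_max_right _ _) hn
  rw [div_le_iff₀ hd] at hmax1 hmax2
  have hb1 : f (-(n:ℝ)) ≤ b := by
    have := h2; push_cast at this; rw [show (0:ℝ) + -(n:ℝ) = -(n:ℝ) by ring] at this; linarith
  have hb2 : b ≤ f (n:ℝ) := by
    have := h1; push_cast at this; rw [zero_add] at this; linarith
  obtain ⟨x, _, hx⟩ := intermediate_value_Icc (by simp [neg_le_self_iff] : -(n:ℝ) ≤ (n:ℝ))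
    hc.continuousOn ⟨hb1, hb2⟩
  exact ⟨x, hx⟩

/-- C¹ expanding degree-two lift data with Fourier condition. -/
structure Raw where
  F : ℝ → ℝ
  F' : ℝ → ℝ
  contF : Continuous F
  contF' : Continuous F'
  hd : ∀ x, HasDerivAt F (F' x) x
  l : ℝ
  M : ℝ
  hl : 1 < l
  hlow : ∀ x, l ≤ F' x
  hup : ∀ x, F' x ≤ M
  hadd : ∀ x, F (x + 1) = F x + 2
  spec : ∀ n : ℤ, n ≠ 0 → ∫ x in (0:ℝ)..1, phi n (F x) = 0

namespace Raw
variable (P : Raw)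

lemma lpos : 0 < P.l := lt_trans one_pos P.hl
lemma F'pos (x : ℝ) : 0 < P.F' x := lt_of_lt_of_le P.lpos (P.hlow x)
lemma Mpos : 0 < P.M := lt_of_lt_of_le (P.F'pos 0) (P.hup 0)
lemma hlM : P.l ≤ P.M := le_trans (P.hlow 0) (P.hup 0)

lemma mono : StrictMono P.F := strictMono_of_deriv_pos fun x => by
  rw [(P.hd x).deriv]; exact P.F'pos x

lemma monotone : Monotone P.F := P.mono.monotone

lemma surj : Function.Surjective P.F :=
  surj_aux P.contF P.monotone two_pos P.hadd

lemma gapF (a b : ℝ) : P.l * |a - b| ≤ |P.F a - P.F b| :=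
  expand_gap P.hd P.lpos.le P.hlow a b

/-- The inverse of `F`. -/
def G : ℝ → ℝ := Function.invFun P.F

lemma FG (y : ℝ) : P.F (P.G y) = y := Function.invFun_eq (P.surj y)
lemma GF (x : ℝ) : P.G (P.F x) = x := Function.leftInverse_invFun P.mono.injective x

lemma gapG (a b : ℝ) : P.l * |P.G a - P.G b| ≤ |a - b| := by
  have := P.gapF (P.G a) (P.G b); rwa [P.FG, P.FG] at this

lemma contG : Continuous P.G := cont_of_gap P.lpos P.gapG

lemma G_add2 (y : ℝ) : P.G (y + 2) = P.G y + 1 := by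
  apply P.mono.injective
  rw [P.FG, P.hadd, P.FG]

/-- Derivative of the inverse. -/
def G' : ℝ → ℝ := fun y => (P.F' (P.G y))⁻¹

lemma G'pos (y : ℝ) : 0 < P.G' y := inv_pos.mpr (P.F'pos _)
lemma contG' : Continuous P.G' :=
  (P.contF'.comp P.contG).inv₀ fun y => (P.F'pos _).ne'

lemma hdG (y : ℝ) : HasDerivAt P.G (P.G' y) y :=
  HasDerivAt.of_local_left_inverse P.contG.continuousAt (P.hd (P.G y)) (P.F'pos _).ne'
    (Filter.Eventually.of_forall P.FG)

lemma G'_low (y : ℝ) : P.M⁻¹ ≤ P.G' y := inv_anti₀ (P.F'pos _) (P.hup _)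
lemma G'_high (y : ℝ) : P.G' y ≤ P.l⁻¹ := inv_anti₀ P.lpos (P.hlow _)

lemma F'per (x : ℝ) : P.F' (x + 1) = P.F' x := by
  have h1 : HasDerivAt (fun y => P.F (y + 1)) (P.F' (x + 1)) x := by
    have := (P.hd (x + 1)).comp x ((hasDerivAt_id x).add_const 1); simp only [mul_one] at this; exact this
  have h2 : HasDerivAt (fun y => P.F (y + 1)) (P.F' x) x := by
    have : (fun y => P.F (y + 1)) = fun y => P.F y + 2 := funext P.hadd
    rw [this]; exact (P.hd x).add_const 2
  exact h1.unique h2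

lemma G'per (y : ℝ) : P.G' (y + 2) = P.G' y := by
  simp only [G', P.G_add2, P.F'per]

lemma phiF_per (n : ℤ) : Function.Periodic (fun x => phi n (P.F x)) 1 := by
  intro x
  simp only [P.hadd]
  have h1 := phi_periodic n (P.F x)
  have h2 := phi_periodic n (P.F x + 1)
  calc phi n (P.F x + 2) = phi n ((P.F x + 1) + 1) := by ring_nf
    _ = phi n (P.F x + 1) := h2
    _ = phi n (P.F x) := h1

/-- Change of variables: the weighted Fourier integrals of `G'` vanish. -/
lemma intG {n : ℤ} (hn : n ≠ 0) : ∫ y in (0:ℝ)..2, P.G' y • phi n y = 0 := by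
  have key := intervalIntegral.integral_comp_smul_deriv
    (f := P.G) (f' := P.G') (g := fun x => phi n (P.F x)) (a := (0:ℝ)) (b := 2)
    (fun y _ => P.hdG y) P.contG'.continuousOn ((continuous_phi n).comp P.contF)
  simp only [Function.comp] at key
  have lhs_eq : ∀ y : ℝ, P.G' y • phi n (P.F (P.G y)) = P.G' y • phi n y := fun y => by
    rw [P.FG]
  simp only [lhs_eq] at key
  rw [key]
  have hG2 : P.G 2 = P.G 0 + 1 := by
    have := P.G_add2 0; rwa [zero_add] at this
  rw [hG2]
  rw [(P.phiF_per n).intervalIntegral_add_eq (P.G 0) 0, zero_add]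
  exact P.spec n hn

end Raw

section Mix
variable (P Q : Raw)

/-- Convex combination of the inverse maps. -/
def mixG (t : ℝ) : ℝ → ℝ := fun y => t * Q.G y + (1 - t) * P.G y

def mixG' (t : ℝ) : ℝ → ℝ := fun y => t * Q.G' y + (1 - t) * P.G' y

/-- Lower/upper data for the mixture. -/
def ll : ℝ := min P.l Q.l
def MM : ℝ := max P.M Q.M

lemma ll_one : 1 < ll P Q := lt_min P.hl Q.hl
lemma ll_pos : 0 < ll P Q := lt_trans one_pos (ll_one P Q)
lemma MM_pos : 0 < MM P Q := lt_of_lt_of_le P.Mpos (le_max_left _ _)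
lemma ll_le_MM : ll P Q ≤ MM P Q :=
  le_trans (min_le_left _ _) (le_trans P.hlM (le_max_left _ _))

variable {t : ℝ}

lemma mixG'_low (ht : t ∈ Icc (0:ℝ) 1) (y : ℝ) : (MM P Q)⁻¹ ≤ mixG' P Q t y := by
  have h1 : (MM P Q)⁻¹ ≤ Q.G' y :=
    le_trans (inv_anti₀ Q.Mpos (le_max_right _ _)) (Q.G'_low y)
  have h2 : (MM P Q)⁻¹ ≤ P.G' y :=
    le_trans (inv_anti₀ P.Mpos (le_max_left _ _)) (P.G'_low y)
  obtain ⟨h0, h1'⟩ := ht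
  simp only [mixG']
  nlinarith

lemma mixG'_high (ht : t ∈ Icc (0:ℝ) 1) (y : ℝ) : mixG' P Q t y ≤ (ll P Q)⁻¹ := by
  have h1 : Q.G' y ≤ (ll P Q)⁻¹ :=
    le_trans (Q.G'_high y) (inv_anti₀ (ll_pos P Q) (min_le_right _ _))
  have h2 : P.G' y ≤ (ll P Q)⁻¹ :=
    le_trans (P.G'_high y) (inv_anti₀ (ll_pos P Q) (min_le_left _ _))
  obtain ⟨h0, h1'⟩ := ht
  simp only [mixG']
  nlinarith

lemma mixG'_pos (ht : t ∈ Icc (0:ℝ) 1) (y : ℝ) : 0 < mixG' P Q t y :=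
  lt_of_lt_of_le (inv_pos.mpr (MM_pos P Q)) (mixG'_low P Q ht y)

lemma hd_mixG (y : ℝ) : HasDerivAt (mixG P Q t) (mixG' P Q t y) y :=
  ((Q.hdG y).const_mul t).add ((P.hdG y).const_mul (1 - t))

lemma cont_mixG : Continuous (mixG P Q t) := by
  apply Continuous.add
  · exact continuous_const.mul Q.contG
  · exact continuous_const.mul P.contG

lemma cont_mixG' : Continuous (mixG' P Q t) := by
  apply Continuous.add
  · exact continuous_const.mul Q.contG'
  · exact continuous_const.mul P.contG'

lemma gap_mixG (ht : t ∈ Icc (0:ℝ) 1) (a b : ℝ) :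
    (MM P Q)⁻¹ * |a - b| ≤ |mixG P Q t a - mixG P Q t b| :=
  expand_gap (hd_mixG P Q) (inv_pos.mpr (MM_pos P Q)).le (mixG'_low P Q ht) a b

lemma mixG_mono (ht : t ∈ Icc (0:ℝ) 1) : StrictMono (mixG P Q t) :=
  strictMono_of_deriv_pos fun y => by
    rw [(hd_mixG P Q y).deriv]; exact mixG'_pos P Q ht y

lemma mixG_add2 (y : ℝ) : mixG P Q t (y + 2) = mixG P Q t y + 1 := by
  simp only [mixG, P.G_add2, Q.G_add2]; ring

lemma mixG_surj (ht : t ∈ Icc (0:ℝ) 1) : Function.Surjective (mixG P Q t) := by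
  have h : Function.Surjective ((mixG P Q t) ∘ fun y : ℝ => 2 * y) := by
    apply surj_aux
    · exact (cont_mixG P Q).comp (continuous_const.mul continuous_id)
    · exact (mixG_mono P Q ht).monotone.comp fun a b hab => by simp; linarith
    · exact one_pos
    · intro x
      simp only [Function.comp_apply]
      rw [show 2 * (x + 1) = 2 * x + 2 by ring, mixG_add2]
  exact h.of_comp

/-- The mixed expanding map: inverse of `mixG`. -/
def mixF (t : ℝ) : ℝ → ℝ := Function.invFun (mixG P Q t)

def mixF' (t : ℝ) : ℝ → ℝ := fun x => (mixG' P Q t (mixF P Q t x))⁻¹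

lemma mixFG (ht : t ∈ Icc (0:ℝ) 1) (x : ℝ) : mixG P Q t (mixF P Q t x) = x :=
  Function.invFun_eq (mixG_surj P Q ht x)

lemma mixGF (ht : t ∈ Icc (0:ℝ) 1) (y : ℝ) : mixF P Q t (mixG P Q t y) = y :=
  Function.leftInverse_invFun (mixG_mono P Q ht).injective y

lemma gap_mixF (ht : t ∈ Icc (0:ℝ) 1) (a b : ℝ) :
    (MM P Q)⁻¹ * |mixF P Q t a - mixF P Q t b| ≤ |a - b| := by
  have := gap_mixG P Q ht (mixF P Q t a) (mixF P Q t b)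
  rwa [mixFG P Q ht, mixFG P Q ht] at this

lemma cont_mixF (ht : t ∈ Icc (0:ℝ) 1) : Continuous (mixF P Q t) :=
  cont_of_gap (inv_pos.mpr (MM_pos P Q)) (gap_mixF P Q ht)

lemma hd_mixF (ht : t ∈ Icc (0:ℝ) 1) (x : ℝ) :
    HasDerivAt (mixF P Q t) (mixF' P Q t x) x :=
  HasDerivAt.of_local_left_inverse (cont_mixF P Q ht).continuousAt
    (hd_mixG P Q (mixF P Q t x)) (mixG'_pos P Q ht _).ne'
    (Filter.Eventually.of_forall (mixFG P Q ht))

lemma cont_mixF' (ht : t ∈ Icc (0:ℝ) 1) : Continuous (mixF' P Q t) :=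
  ((cont_mixG' P Q).comp (cont_mixF P Q ht)).inv₀ fun x => (mixG'_pos P Q ht _).ne'

lemma mixF'_low (ht : t ∈ Icc (0:ℝ) 1) (x : ℝ) : ll P Q ≤ mixF' P Q t x := by
  have h := inv_anti₀ (mixG'_pos P Q ht (mixF P Q t x)) (mixG'_high P Q ht (mixF P Q t x))
  rwa [inv_inv] at h

lemma mixF'_high (ht : t ∈ Icc (0:ℝ) 1) (x : ℝ) : mixF' P Q t x ≤ MM P Q := by
  have h := inv_anti₀ (inv_pos.mpr (MM_pos P Q)) (mixG'_low P Q ht (mixF P Q t x))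
  rwa [inv_inv] at h

lemma mixF_add1 (ht : t ∈ Icc (0:ℝ) 1) (x : ℝ) :
    mixF P Q t (x + 1) = mixF P Q t x + 2 := by
  apply (mixG_mono P Q ht).injective
  rw [mixFG P Q ht, mixG_add2, mixFG P Q ht]

lemma mixG'_per (y : ℝ) : mixG' P Q t (y + 2) = mixG' P Q t y := by
  simp only [mixG', P.G'per, Q.G'per]

lemma mix_spec (ht : t ∈ Icc (0:ℝ) 1) {n : ℤ} (hn : n ≠ 0) :
    ∫ x in (0:ℝ)..1, phi n (mixF P Q t x) = 0 := by
  have key := intervalIntegral.integral_comp_smul_deriv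
    (f := mixF P Q t) (f' := mixF' P Q t) (g := fun y => mixG' P Q t y • phi n y)
    (a := (0:ℝ)) (b := 1) (fun x _ => hd_mixF P Q ht x) (cont_mixF' P Q ht).continuousOn
    ((cont_mixG' P Q).smul (continuous_phi n))
  simp only [Function.comp] at key
  have lhs_eq : ∀ x : ℝ, mixF' P Q t x • (mixG' P Q t (mixF P Q t x) • phi n (mixF P Q t x))
      = phi n (mixF P Q t x) := fun x => by
    rw [smul_smul, mixF', inv_mul_cancel₀ (mixG'_pos P Q ht _).ne', one_smul]
  simp only [lhs_eq] at key
  rw [key]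
  have h1 : mixF P Q t 1 = mixF P Q t 0 + 2 := by
    have := mixF_add1 P Q ht 0; rwa [zero_add] at this
  rw [h1]
  have hper : Function.Periodic (fun y => mixG' P Q t y • phi n y) 2 := by
    intro y
    simp only [mixG'_per]
    congr 1
    have h2 := phi_periodic n y
    have h3 := phi_periodic n (y + 1)
    calc phi n (y + 2) = phi n ((y + 1) + 1) := by ring_nf
      _ = phi n (y + 1) := h3
      _ = phi n y := h2
  rw [hper.intervalIntegral_add_eq (mixF P Q t 0) 0, zero_add]
  have expand : ∀ y : ℝ, mixG' P Q t y • phi n y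
      = t • (Q.G' y • phi n y) + (1 - t) • (P.G' y • phi n y) := fun y => by
    simp only [mixG', smul_smul, ← add_smul]
  rw [intervalIntegral.integral_congr (fun y _ => expand y)]
  have hiQ : IntervalIntegrable (fun y => t • (Q.G' y • phi n y)) volume 0 2 :=
    ((Q.contG'.smul (continuous_phi n)).const_smul t :
      Continuous (fun y => t • (Q.G' y • phi n y))).intervalIntegrable 0 2
  have hiP : IntervalIntegrable (fun y => (1 - t) • (P.G' y • phi n y)) volume 0 2 :=
    ((P.contG'.smul (continuous_phi n)).const_smul (1 - t) :
      Continuous (fun y => (1 - t) • (P.G' y • phi n y))).intervalIntegrable 0 2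
  rw [intervalIntegral.integral_add hiQ hiP, intervalIntegral.integral_smul,
    intervalIntegral.integral_smul, Q.intG hn, P.intG hn]
  simp

/-- Endpoint identification. -/
lemma mixF_zero (x : ℝ) : mixF P Q 0 x = P.F x := by
  apply (mixG_mono P Q (by norm_num : (0:ℝ) ∈ Icc (0:ℝ) 1)).injective
  rw [mixFG P Q (by norm_num)]
  simp only [mixG, zero_mul, zero_add, sub_zero, one_mul, P.GF]

lemma mixF_one (x : ℝ) : mixF P Q 1 x = Q.F x := by
  apply (mixG_mono P Q (by norm_num : (1:ℝ) ∈ Icc (0:ℝ) 1)).injective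
  rw [mixFG P Q (by norm_num)]
  simp only [mixG, one_mul, sub_self, zero_mul, add_zero, Q.GF]

lemma mixF'_zero (x : ℝ) : mixF' P Q 0 x = P.F' x := by
  simp only [mixF', mixG', mixF_zero, zero_mul, zero_add, sub_zero, one_mul, Raw.G', P.GF, inv_inv]

lemma mixF'_one (x : ℝ) : mixF' P Q 1 x = Q.F' x := by
  simp only [mixF', mixG', mixF_one, one_mul, sub_self, zero_mul, add_zero, Raw.G', Q.GF, inv_inv]

end Mix

section PathSec
variable (P Q : Raw)

lemma exists_gap_bound : ∃ C : ℝ, 0 ≤ C ∧ ∀ y, |Q.G y - P.G y| ≤ C := by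
  have hper : Function.Periodic (fun y => |Q.G y - P.G y|) 2 := fun y => by
    simp only [Q.G_add2, P.G_add2]
    congr 1
    ring
  have hcont : Continuous fun y => |Q.G y - P.G y| := (Q.contG.sub P.contG).abs
  obtain ⟨z, _, hzmax⟩ := isCompact_Icc.exists_isMaxOn
    (nonempty_Icc.mpr (by norm_num : (0:ℝ) ≤ 2)) hcont.continuousOn
  refine ⟨|Q.G z - P.G z|, abs_nonneg _, fun y => ?_⟩
  obtain ⟨y', hy', hy'eq⟩ := hper.exists_mem_Ico₀ (by norm_num) y
  rw [hy'eq]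
  exact hzmax (Ico_subset_Icc_self hy')

lemma mixF_t_lip {t s : ℝ} (ht : t ∈ Icc (0:ℝ) 1) (hs : s ∈ Icc (0:ℝ) 1) {C : ℝ}
    (hC : ∀ y, |Q.G y - P.G y| ≤ C) (x : ℝ) :
    |mixF P Q t x - mixF P Q s x| ≤ MM P Q * (C * |t - s|) := by
  set a := mixF P Q t x
  set b := mixF P Q s x
  have h1 : mixG P Q s a - mixG P Q s b = (s - t) * (Q.G a - P.G a) := by
    rw [mixFG P Q hs x]
    have h2 : (x : ℝ) = mixG P Q t a := (mixFG P Q ht x).symm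
    rw [h2]
    simp only [mixG]
    ring
  have h3 : |mixG P Q s a - mixG P Q s b| ≤ |t - s| * C := by
    rw [h1, abs_mul]
    have := hC a
    have h4 : |s - t| = |t - s| := abs_sub_comm s t
    rw [h4]
    have h5 : (0:ℝ) ≤ |t - s| := abs_nonneg _
    nlinarith [abs_nonneg (Q.G a - P.G a)]
  have h6 := gap_mixG P Q hs a b
  have h7 : (MM P Q)⁻¹ * |a - b| ≤ |t - s| * C := le_trans h6 h3
  have h8 := MM_pos P Q
  have h9 : (MM P Q) * ((MM P Q)⁻¹ * |a - b|) ≤ (MM P Q) * (|t - s| * C) :=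
    mul_le_mul_of_nonneg_left h7 h8.le
  rw [← mul_assoc, mul_inv_cancel₀ h8.ne', one_mul] at h9
  calc |a - b| ≤ MM P Q * (|t - s| * C) := h9
    _ = MM P Q * (C * |t - s|) := by ring

lemma cont_H : Continuous (fun q : unitInterval × ℝ => mixF P Q q.1 q.2) := by
  obtain ⟨C, hC0, hC⟩ := exists_gap_bound P Q
  rw [Metric.continuous_iff]
  rintro ⟨t, x⟩ ε hε
  have h8 := MM_pos P Q
  have hKpos : 0 < MM P Q * C + MM P Q + 1 := by nlinarith
  refine ⟨ε / (MM P Q * C + MM P Q + 1), by positivity, ?_⟩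
  rintro ⟨s, y⟩ hd
  rw [Prod.dist_eq, max_lt_iff] at hd
  obtain ⟨hd1, hd2⟩ := hd
  rw [Subtype.dist_eq, Real.dist_eq] at hd1
  rw [Real.dist_eq] at hd2
  rw [Real.dist_eq]
  have e1 : |mixF P Q (s:ℝ) y - mixF P Q (t:ℝ) y| ≤ MM P Q * (C * |(s:ℝ) - (t:ℝ)|) :=
    mixF_t_lip P Q s.2 t.2 hC y
  have e2 : |mixF P Q (t:ℝ) y - mixF P Q (t:ℝ) x| ≤ MM P Q * |y - x| := by
    have h6 := gap_mixF P Q t.2 y x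
    have h9 : (MM P Q) * ((MM P Q)⁻¹ * |mixF P Q (t:ℝ) y - mixF P Q (t:ℝ) x|)
        ≤ (MM P Q) * |y - x| := mul_le_mul_of_nonneg_left h6 h8.le
    rwa [← mul_assoc, mul_inv_cancel₀ h8.ne', one_mul] at h9
  calc |mixF P Q (s:ℝ) y - mixF P Q (t:ℝ) x|
      ≤ |mixF P Q (s:ℝ) y - mixF P Q (t:ℝ) y| + |mixF P Q (t:ℝ) y - mixF P Q (t:ℝ) x| :=
        abs_sub_le _ _ _
    _ ≤ MM P Q * (C * |(s:ℝ) - (t:ℝ)|) + MM P Q * |y - x| := add_le_add e1 e2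
    _ < ε := by
        set d := ε / (MM P Q * C + MM P Q + 1)
        have hd3 : |(s:ℝ) - (t:ℝ)| < d := hd1
        have hd4 : |y - x| < d := hd2
        have hdpos : 0 < d := by positivity
        have habs1 : (0:ℝ) ≤ |(s:ℝ) - (t:ℝ)| := abs_nonneg _
        have habs2 : (0:ℝ) ≤ |y - x| := abs_nonneg _
        have hεd : (MM P Q * C + MM P Q + 1) * d = ε := by
          rw [show d = ε / (MM P Q * C + MM P Q + 1) from rfl]
          field_simp
        nlinarith [mul_le_mul_of_nonneg_left hd3.le (mul_nonneg h8.le hC0),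
          mul_le_mul_of_nonneg_left hd4.le h8.le]

lemma cont_H' : Continuous (fun q : unitInterval × ℝ => mixF' P Q q.1 q.2) := by
  have heq : (fun q : unitInterval × ℝ => mixF' P Q q.1 q.2)
      = fun q : unitInterval × ℝ => ((q.1 : ℝ) * Q.G' (mixF P Q q.1 q.2)
          + (1 - (q.1 : ℝ)) * P.G' (mixF P Q q.1 q.2))⁻¹ := rfl
  rw [heq]
  apply Continuous.inv₀
  · apply Continuous.add
    · exact (continuous_subtype_val.comp continuous_fst).mul (Q.contG'.comp (cont_H P Q))
    · exact (continuous_const.sub (continuous_subtype_val.comp continuous_fst)).mul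
        (P.contG'.comp (cont_H P Q))
  · exact fun q => (mixG'_pos P Q q.1.2 _).ne'

end PathSec

/-- The mixture as `Raw` data. -/
def mixRaw (P Q : Raw) (t : ℝ) (ht : t ∈ Icc (0:ℝ) 1) : Raw where
  F := mixF P Q t
  F' := mixF' P Q t
  contF := cont_mixF P Q ht
  contF' := cont_mixF' P Q ht
  hd := hd_mixF P Q ht
  l := ll P Q
  M := MM P Q
  hl := ll_one P Q
  hlow := mixF'_low P Q ht
  hup := mixF'_high P Q ht
  hadd := mixF_add1 P Q ht
  spec := fun _ hn => mix_spec P Q ht hn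

/-- A `Raw` yields an element of `LiftSpace`. -/
def Raw.toLift (P : Raw) : LiftSpace :=
  ⟨(⟨P.F, P.contF⟩, ⟨P.F', P.contF'⟩), by
    refine ⟨?_, ?_, ⟨P.l, P.hl, P.hlow⟩, P.hadd,
      measure_cond P.contF P.hadd P.spec⟩
    · rw [show ⇑(⟨P.F, P.contF⟩ : C(ℝ, ℝ)) = P.F from rfl, contDiff_one_iff_deriv]
      refine ⟨fun x => (P.hd x).differentiableAt, ?_⟩
      have hderiv : deriv P.F = P.F' := funext fun x => (P.hd x).deriv
      rw [hderiv]
      exact P.contF'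
    · intro x
      exact (P.hd x).deriv⟩

/-- The path in `LiftSpace` joining `P.toLift` and `Q.toLift`. -/
def mixPath (P Q : Raw) : Path P.toLift Q.toLift where
  toFun t := (mixRaw P Q t t.2).toLift
  continuous_toFun := by
    apply Continuous.subtype_mk
    apply Continuous.prodMk
    · exact ContinuousMap.continuous_of_continuous_uncurry _ (cont_H P Q)
    · exact ContinuousMap.continuous_of_continuous_uncurry _ (cont_H' P Q)
  source' := by
    apply Subtype.ext
    refine Prod.ext ?_ ?_
    · exact ContinuousMap.ext fun x => by
        show mixF P Q ((0 : unitInterval) : ℝ) x = P.F x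
        rw [Icc.coe_zero, mixF_zero]
    · exact ContinuousMap.ext fun x => by
        show mixF' P Q ((0 : unitInterval) : ℝ) x = P.F' x
        rw [Icc.coe_zero, mixF'_zero]
  target' := by
    apply Subtype.ext
    refine Prod.ext ?_ ?_
    · exact ContinuousMap.ext fun x => by
        show mixF P Q ((1 : unitInterval) : ℝ) x = Q.F x
        rw [Icc.coe_one, mixF_one]
    · exact ContinuousMap.ext fun x => by
        show mixF' P Q ((1 : unitInterval) : ℝ) x = Q.F' x
        rw [Icc.coe_one, mixF'_one]

lemma per_deriv {F F' : ℝ → ℝ} (hd : ∀ x, HasDerivAt F (F' x) x)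
    (hadd : ∀ x, F (x + 1) = F x + 2) (x : ℝ) : F' (x + 1) = F' x := by
  have h1 : HasDerivAt (fun y => F (y + 1)) (F' (x + 1)) x := by
    have := (hd (x + 1)).comp x ((hasDerivAt_id x).add_const 1); simp only [mul_one] at this; exact this
  have h2 : HasDerivAt (fun y => F (y + 1)) (F' x) x := by
    have : (fun y => F (y + 1)) = fun y => F y + 2 := funext hadd
    rw [this]; exact (hd x).add_const 2
  exact h1.unique h2

lemma exists_raw (p : LiftSpace) : ∃ P : Raw, P.F = ⇑p.1.1 ∧ P.F' = ⇑p.1.2 := by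
  obtain ⟨h1, h2, ⟨l, hl, hlow⟩, hadd, hmeas⟩ := p.2
  set f := p.1.1
  set f' := p.1.2
  have hd : ∀ x, HasDerivAt (⇑f) (f' x) x := fun x => by
    have := ((h1.differentiable one_ne_zero) x).hasDerivAt
    rwa [h2 x] at this
  have hper : Function.Periodic (⇑f') 1 := fun x => per_deriv hd hadd x
  obtain ⟨z, _, hzmax⟩ := isCompact_Icc.exists_isMaxOn
    (nonempty_Icc.mpr (by norm_num : (0:ℝ) ≤ 1)) f'.continuous.continuousOn
  have hup : ∀ x, f' x ≤ f' z := by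
    intro x
    obtain ⟨y, hy, hyeq⟩ := hper.exists_mem_Ico₀ one_pos x
    rw [hyeq]
    exact hzmax (Ico_subset_Icc_self hy)
  have hspec : ∀ n : ℤ, n ≠ 0 → ∫ x in (0:ℝ)..1, phi n (f x) = 0 := by
    intro n hn
    have hmap := hmeas (gmap ⇑f) (gmap_spec hadd)
    have h3 := integral_gmap f.continuous hadd (fun z => (fourier n z : ℂ)) (fourier n).continuous
    rw [hmap, integral_circ] at h3
    simp_rw [phi_eq] at h3
    rw [← h3]
    exact integral_phi hn
  exact ⟨⟨⇑f, ⇑f', f.continuous, f'.continuous, hd, l, f' z, hl, hlow, hup, hadd, hspec⟩,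
    rfl, rfl⟩

lemma toLift_eq (p : LiftSpace) (P : Raw) (h1 : P.F = ⇑p.1.1) (h2 : P.F' = ⇑p.1.2) :
    P.toLift = p := by
  apply Subtype.ext
  refine Prod.ext ?_ ?_
  · exact ContinuousMap.ext fun x => congrFun h1 x
  · exact ContinuousMap.ext fun x => congrFun h2 x

/-- The doubling map as `Raw`. -/
def doubling : Raw where
  F := fun x => 2 * x
  F' := fun _ => 2
  contF := continuous_const.mul continuous_id
  contF' := continuous_const
  hd := fun x => by simpa using (hasDerivAt_id x).const_mul 2
  l := 2
  M := 2
  hl := one_lt_two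
  hlow := fun _ => le_refl 2
  hup := fun _ => le_refl 2
  hadd := fun x => by ring
  spec := fun n hn => by
    have h : ∀ x : ℝ, phi n (2 * x) = phi (2 * n) x := fun x => by
      simp only [phi]
      congr 1
      push_cast
      ring
    simp_rw [h]
    exact integral_phi (mul_ne_zero two_ne_zero hn)


end
/-- `Λ_Leb` is path-connected. -/
theorem stmt12 : PathConnectedSpace LambdaLeb := by
  constructor
  · exact ⟨Quotient.mk liftSetoid doubling.toLift⟩
  · intro x y
    obtain ⟨p, rfl⟩ := Quot.exists_rep x
    obtain ⟨q, rfl⟩ := Quot.exists_rep y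
    obtain ⟨P, hP1, hP2⟩ := exists_raw p
    obtain ⟨Q, hQ1, hQ2⟩ := exists_raw q
    rw [← toLift_eq p P hP1 hP2, ← toLift_eq q Q hQ1 hQ2]
    exact ⟨(mixPath P Q).map continuous_quot_mk⟩

end Stmt12
end

section
/- Let f₁ : [0,a] → [0,1] be a C¹ expanding diffeomorphism depending continuously (in C¹) on a parameter s ∈ [0,1]. Then the unique Lebesgue-preserving full-branch extensions f^{(s)} : [0,1] → [0,1] depend continuously on s in the C¹ topology. -/
open MeasureTheory Set Filter Topology

/-- If the first branches `f₁^{(s)} : [0, a s] → [0,1]` of a family of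
Lebesgue-preserving full-branch expanding maps depend continuously on the parameter `s`
in the C¹ sense (jointly continuous values and derivatives), then the unique
Lebesgue-preserving extensions (i.e. the second branches `f₂^{(s)}`) also depend
continuously on `s` in the C¹ sense. -/
theorem stmt19 (a : ℝ → ℝ) (f₁ f₁' f₂ f₂' : ℝ → ℝ → ℝ)
    (haC : Continuous a) (haI : ∀ s ∈ Icc (0:ℝ) 1, a s ∈ Ioo (0:ℝ) 1)
    (hf₁cont : ContinuousOn (fun p : ℝ × ℝ => f₁ p.1 p.2)
      {p : ℝ × ℝ | p.1 ∈ Icc (0:ℝ) 1 ∧ p.2 ∈ Icc 0 (a p.1)})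
    (hf₁'cont : ContinuousOn (fun p : ℝ × ℝ => f₁' p.1 p.2)
      {p : ℝ × ℝ | p.1 ∈ Icc (0:ℝ) 1 ∧ p.2 ∈ Icc 0 (a p.1)})
    (hf₁d : ∀ s ∈ Icc (0:ℝ) 1, ∀ x ∈ Icc (0:ℝ) (a s),
      HasDerivWithinAt (f₁ s) (f₁' s x) (Icc 0 (a s)) x)
    (hf₁e : ∀ s ∈ Icc (0:ℝ) 1, ∀ x ∈ Icc (0:ℝ) (a s), 1 < f₁' s x)
    (hf₁0 : ∀ s ∈ Icc (0:ℝ) 1, f₁ s 0 = 0)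
    (hf₁a : ∀ s ∈ Icc (0:ℝ) 1, f₁ s (a s) = 1)
    (hf₂d : ∀ s ∈ Icc (0:ℝ) 1, ∀ x ∈ Icc (a s) 1,
      HasDerivWithinAt (f₂ s) (f₂' s x) (Icc (a s) 1) x)
    (hf₂e : ∀ s ∈ Icc (0:ℝ) 1, ∀ x ∈ Icc (a s) 1, 1 < f₂' s x)
    (hf₂a : ∀ s ∈ Icc (0:ℝ) 1, f₂ s (a s) = 0)
    (hf₂1 : ∀ s ∈ Icc (0:ℝ) 1, f₂ s 1 = 1)
    (hpres : ∀ s ∈ Icc (0:ℝ) 1,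
      Measure.map (fun x => if x < a s then f₁ s x else f₂ s x)
        (volume.restrict (Icc (0:ℝ) 1)) = volume.restrict (Icc (0:ℝ) 1)) :
    ContinuousOn (fun p : ℝ × ℝ => f₂ p.1 p.2)
        {p : ℝ × ℝ | p.1 ∈ Icc (0:ℝ) 1 ∧ p.2 ∈ Icc (a p.1) 1} ∧
      ContinuousOn (fun p : ℝ × ℝ => f₂' p.1 p.2)
        {p : ℝ × ℝ | p.1 ∈ Icc (0:ℝ) 1 ∧ p.2 ∈ Icc (a p.1) 1} := by
  -- continuity of the branches on their intervals
  have hf₁contOn : ∀ s ∈ Icc (0:ℝ) 1, ContinuousOn (f₁ s) (Icc 0 (a s)) :=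
    fun s hs x hx => (hf₁d s hs x hx).continuousWithinAt
  have hf₂contOn : ∀ s ∈ Icc (0:ℝ) 1, ContinuousOn (f₂ s) (Icc (a s) 1) :=
    fun s hs x hx => (hf₂d s hs x hx).continuousWithinAt
  -- strict monotonicity
  have hf₁mono : ∀ s ∈ Icc (0:ℝ) 1, StrictMonoOn (f₁ s) (Icc 0 (a s)) := by
    intro s hs
    apply strictMonoOn_of_deriv_pos (convex_Icc _ _) (hf₁contOn s hs)
    intro x hx
    rw [interior_Icc] at hx
    have hx' : x ∈ Icc 0 (a s) := Ioo_subset_Icc_self hx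
    have hd := (hf₁d s hs x hx').hasDerivAt (Icc_mem_nhds hx.1 hx.2)
    rw [hd.deriv]; linarith [hf₁e s hs x hx']
  have hf₂mono : ∀ s ∈ Icc (0:ℝ) 1, StrictMonoOn (f₂ s) (Icc (a s) 1) := by
    intro s hs
    apply strictMonoOn_of_deriv_pos (convex_Icc _ _) (hf₂contOn s hs)
    intro x hx
    rw [interior_Icc] at hx
    have hx' : x ∈ Icc (a s) 1 := Ioo_subset_Icc_self hx
    have hd := (hf₂d s hs x hx').hasDerivAt (Icc_mem_nhds hx.1 hx.2)
    rw [hd.deriv]; linarith [hf₂e s hs x hx']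
  -- strict monotonicity of φ := f₁ − id
  have hφmono : ∀ s ∈ Icc (0:ℝ) 1, StrictMonoOn (fun t => f₁ s t - t) (Icc 0 (a s)) := by
    intro s hs
    apply strictMonoOn_of_deriv_pos (convex_Icc _ _)
      ((hf₁contOn s hs).sub continuousOn_id)
    intro x hx
    rw [interior_Icc] at hx
    have hx' : x ∈ Icc 0 (a s) := Ioo_subset_Icc_self hx
    have hd := ((hf₁d s hs x hx').hasDerivAt (Icc_mem_nhds hx.1 hx.2)).sub (hasDerivAt_id x)
    rw [hd.deriv]; linarith [hf₁e s hs x hx']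
  -- uniqueness of solutions of the implicit equation
  have uniq : ∀ s ∈ Icc (0:ℝ) 1, ∀ x : ℝ, ∀ y y' : ℝ,
      y - x + a s ∈ Icc 0 (a s) → f₁ s (y - x + a s) = y →
      y' - x + a s ∈ Icc 0 (a s) → f₁ s (y' - x + a s) = y' → y = y' := by
    intro s hs x y y' hc hf hc' hf'
    have h1 : (fun t => f₁ s t - t) (y - x + a s) = (fun t => f₁ s t - t) (y' - x + a s) := by
      simp only [hf, hf']; ring
    have := (hφmono s hs).injOn hc hc' h1
    linarith
  -- the key identity coming from measure preservation
  have key : ∀ s ∈ Icc (0:ℝ) 1, ∀ x ∈ Icc (a s) 1,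
      f₂ s x ∈ Icc (0:ℝ) 1 ∧ f₂ s x - x + a s ∈ Icc 0 (a s) ∧
      f₁ s (f₂ s x - x + a s) = f₂ s x := by
    intro s hs x hx
    have ha := haI s hs
    rcases eq_or_lt_of_le hx.1 with hxa | hxa
    · -- x = a s
      rw [← hxa]
      have h0 : f₂ s (a s) = 0 := hf₂a s hs
      have h1 : f₂ s (a s) - a s + a s = 0 := by rw [h0]; ring
      refine ⟨by rw [h0]; exact ⟨le_rfl, zero_le_one⟩, ?_, ?_⟩
      · rw [h1]; exact ⟨le_rfl, ha.1.le⟩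
      · rw [h1, hf₁0 s hs, h0]
    rcases eq_or_lt_of_le hx.2 with hx1 | hx1
    · -- x = 1
      rw [hx1]
      have h0 : f₂ s 1 = 1 := hf₂1 s hs
      have h1 : f₂ s 1 - 1 + a s = a s := by rw [h0]; ring
      refine ⟨by rw [h0]; exact ⟨zero_le_one, le_rfl⟩, ?_, ?_⟩
      · rw [h1]; exact ⟨ha.1.le, le_rfl⟩
      · rw [h1, hf₁a s hs, h0]
    -- main case a s < x < 1
    have haI1 : a s ∈ Icc (a s) 1 := ⟨le_rfl, ha.2.le⟩
    have h1I : (1:ℝ) ∈ Icc (a s) 1 := ⟨ha.2.le, le_rfl⟩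
    have ht0 : 0 < f₂ s x := by
      have := hf₂mono s hs haI1 hx hxa
      rwa [hf₂a s hs] at this
    have ht1 : f₂ s x < 1 := by
      have := hf₂mono s hs hx h1I hx1
      rwa [hf₂1 s hs] at this
    set t := f₂ s x with htdef
    -- find c with f₁ s c = t
    obtain ⟨c, hc, hfc⟩ : ∃ c ∈ Icc 0 (a s), f₁ s c = t := by
      have : t ∈ Icc (f₁ s 0) (f₁ s (a s)) := by
        rw [hf₁0 s hs, hf₁a s hs]; exact ⟨ht0.le, ht1.le⟩
      obtain ⟨c, hc, hfc⟩ := intermediate_value_Icc ha.1.le (hf₁contOn s hs) this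
      exact ⟨c, hc, hfc⟩
    have hca : c < a s := by
      rcases eq_or_lt_of_le hc.2 with h | h
      · exfalso; rw [h, hf₁a s hs] at hfc; linarith
      · exact h
    set f := fun x' => if x' < a s then f₁ s x' else f₂ s x' with hfdef
    have hmap := hpres s hs
    have hae : AEMeasurable f (volume.restrict (Icc (0:ℝ) 1)) := by
      by_contra h
      rw [Measure.map_of_not_aemeasurable h] at hmap
      have h2 : (volume.restrict (Icc (0:ℝ) 1)) (Icc (0:ℝ) 1) = 0 := by
        rw [← hmap]; simp
      rw [Measure.restrict_apply_self, Real.volume_Icc] at h2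
      simp at h2
    have hset : f ⁻¹' (Icc 0 t) ∩ Icc 0 1 = Icc 0 c ∪ Icc (a s) x := by
      ext x'
      simp only [mem_inter_iff, mem_preimage, mem_Icc, mem_union, hfdef]
      constructor
      · rintro ⟨⟨hf0, hft⟩, hx'0, hx'1⟩
        by_cases hlt : x' < a s
        · left
          refine ⟨hx'0, ?_⟩
          by_contra hcx
          push_neg at hcx
          have hmlt := hf₁mono s hs hc ⟨hx'0, hlt.le⟩ hcx
          rw [if_pos hlt] at hft
          rw [hfc] at hmlt; linarith
        · right
          push_neg at hlt
          refine ⟨hlt, ?_⟩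
          rw [if_neg (not_lt.2 hlt)] at hft
          by_contra hxx
          push_neg at hxx
          have := hf₂mono s hs hx ⟨hlt, hx'1⟩ hxx
          linarith
      · rintro (⟨h0, hcx⟩ | ⟨hax, hxx⟩)
        · have hlt : x' < a s := lt_of_le_of_lt hcx hca
          rw [if_pos hlt]
          have hm : x' ∈ Icc 0 (a s) := ⟨h0, hlt.le⟩
          have hle : f₁ s x' ≤ f₁ s c := (hf₁mono s hs).monotoneOn hm hc hcx
          have hge : f₁ s 0 ≤ f₁ s x' := (hf₁mono s hs).monotoneOn ⟨le_rfl, ha.1.le⟩ hm h0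
          rw [hf₁0 s hs] at hge
          rw [hfc] at hle
          exact ⟨⟨hge, hle⟩, h0, by linarith⟩
        · rw [if_neg (not_lt.2 hax)]
          have hm : x' ∈ Icc (a s) 1 := ⟨hax, by linarith [hx.2]⟩
          have hle : f₂ s x' ≤ f₂ s x := (hf₂mono s hs).monotoneOn hm hx hxx
          have hge : f₂ s (a s) ≤ f₂ s x' := (hf₂mono s hs).monotoneOn haI1 hm hax
          rw [hf₂a s hs] at hge
          exact ⟨⟨hge, hle⟩, by linarith [ha.1], hm.2⟩
    have hdisj : Disjoint (Icc (0:ℝ) c) (Icc (a s) x) := by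
      rw [Set.disjoint_left]
      intro x' h1 h2
      exact absurd (lt_of_le_of_lt h1.2 hca) (not_lt.2 h2.1)
    have h1 : (Measure.map f (volume.restrict (Icc (0:ℝ) 1))) (Icc 0 t)
        = ENNReal.ofReal t := by
      rw [hmap, Measure.restrict_apply' measurableSet_Icc,
        inter_eq_left.2 (Icc_subset_Icc le_rfl ht1.le), Real.volume_Icc, sub_zero]
    have h2 : (Measure.map f (volume.restrict (Icc (0:ℝ) 1))) (Icc 0 t)
        = ENNReal.ofReal c + ENNReal.ofReal (x - a s) := by
      rw [Measure.map_apply_of_aemeasurable hae measurableSet_Icc,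
        Measure.restrict_apply' measurableSet_Icc, hset,
        measure_union hdisj measurableSet_Icc, Real.volume_Icc, Real.volume_Icc, sub_zero]
    rw [h1] at h2
    rw [← ENNReal.ofReal_add hc.1 (by linarith [hx.1])] at h2
    have hteq : t = c + (x - a s) :=
      (ENNReal.ofReal_eq_ofReal_iff ht0.le (by linarith [hc.1, hx.1])).1 h2
    have hceq : f₂ s x - x + a s = c := by rw [← htdef]; linarith
    refine ⟨⟨ht0.le, ht1.le⟩, ?_, ?_⟩
    · rw [hceq]; exact hc
    · rw [hceq, hfc]
  -- Part 1: joint continuity of f₂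
  have cont2 : ContinuousOn (fun p : ℝ × ℝ => f₂ p.1 p.2)
      {p : ℝ × ℝ | p.1 ∈ Icc (0:ℝ) 1 ∧ p.2 ∈ Icc (a p.1) 1} := by
    intro p₀ hp₀
    have hp₀1 : p₀.1 ∈ Icc (0:ℝ) 1 := hp₀.1
    have hp₀2 : p₀.2 ∈ Icc (a p₀.1) 1 := hp₀.2
    unfold ContinuousWithinAt
    apply tendsto_of_subseq_tendsto
    intro ns hns
    rw [tendsto_nhdsWithin_iff] at hns
    obtain ⟨hns1, hns2⟩ := hns
    have hyI : ∀ᶠ n in atTop, f₂ (ns n).1 (ns n).2 ∈ Icc (0:ℝ) 1 :=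
      hns2.mono (fun n hn => (key _ hn.1 _ hn.2).1)
    obtain ⟨L, hL, φ, hφ, hLtend⟩ := isCompact_Icc.tendsto_subseq' hyI.frequently
    refine ⟨φ, ?_⟩
    have hKev : ∀ᶠ k in atTop, ns (φ k) ∈
        {p : ℝ × ℝ | p.1 ∈ Icc (0:ℝ) 1 ∧ p.2 ∈ Icc (a p.1) 1} :=
      hφ.tendsto_atTop.eventually hns2
    have hsx : Tendsto (fun k => ns (φ k)) atTop (𝓝 p₀) := hns1.comp hφ.tendsto_atTop
    have hs1 : Tendsto (fun k => (ns (φ k)).1) atTop (𝓝 p₀.1) :=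
      (continuous_fst.tendsto p₀).comp hsx
    have hs2 : Tendsto (fun k => (ns (φ k)).2) atTop (𝓝 p₀.2) :=
      (continuous_snd.tendsto p₀).comp hsx
    have hsa : Tendsto (fun k => a (ns (φ k)).1) atTop (𝓝 (a p₀.1)) :=
      (haC.tendsto p₀.1).comp hs1
    have hy : Tendsto (fun k => f₂ (ns (φ k)).1 (ns (φ k)).2) atTop (𝓝 L) := hLtend
    have hctend : Tendsto (fun k => f₂ (ns (φ k)).1 (ns (φ k)).2 - (ns (φ k)).2 + a (ns (φ k)).1)
        atTop (𝓝 (L - p₀.2 + a p₀.1)) := (hy.sub hs2).add hsa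
    have hcev : ∀ᶠ k in atTop,
        f₂ (ns (φ k)).1 (ns (φ k)).2 - (ns (φ k)).2 + a (ns (φ k)).1 ∈
          Icc 0 (a (ns (φ k)).1) :=
      hKev.mono (fun k hk => (key _ hk.1 _ hk.2).2.1)
    have hc0 : 0 ≤ L - p₀.2 + a p₀.1 :=
      ge_of_tendsto hctend (hcev.mono fun k hk => hk.1)
    have hc1 : L - p₀.2 + a p₀.1 ≤ a p₀.1 :=
      le_of_tendsto_of_tendsto hctend hsa (hcev.mono fun k hk => hk.2)
    have hcinf : (p₀.1, L - p₀.2 + a p₀.1) ∈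
        {p : ℝ × ℝ | p.1 ∈ Icc (0:ℝ) 1 ∧ p.2 ∈ Icc 0 (a p.1)} := ⟨hp₀1, hc0, hc1⟩
    have hqt : Tendsto (fun k => ((ns (φ k)).1,
        f₂ (ns (φ k)).1 (ns (φ k)).2 - (ns (φ k)).2 + a (ns (φ k)).1)) atTop
        (𝓝[{p : ℝ × ℝ | p.1 ∈ Icc (0:ℝ) 1 ∧ p.2 ∈ Icc 0 (a p.1)}]
          (p₀.1, L - p₀.2 + a p₀.1)) := by
      rw [tendsto_nhdsWithin_iff]
      refine ⟨hs1.prodMk_nhds hctend, ?_⟩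
      exact hKev.mono (fun k hk => ⟨hk.1, (key _ hk.1 _ hk.2).2.1⟩)
    have hf₁lim : Tendsto (fun k => f₁ (ns (φ k)).1
        (f₂ (ns (φ k)).1 (ns (φ k)).2 - (ns (φ k)).2 + a (ns (φ k)).1)) atTop
        (𝓝 (f₁ p₀.1 (L - p₀.2 + a p₀.1))) :=
      (hf₁cont _ hcinf).tendsto.comp hqt
    have hylim : Tendsto (fun k => f₂ (ns (φ k)).1 (ns (φ k)).2) atTop
        (𝓝 (f₁ p₀.1 (L - p₀.2 + a p₀.1))) := by
      apply hf₁lim.congr'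
      exact hKev.mono (fun k hk => (key _ hk.1 _ hk.2).2.2)
    have hLval : f₁ p₀.1 (L - p₀.2 + a p₀.1) = L := tendsto_nhds_unique hylim hy
    have hL2 : L = f₂ p₀.1 p₀.2 := by
      apply uniq p₀.1 hp₀1 p₀.2 L (f₂ p₀.1 p₀.2) ⟨hc0, hc1⟩ hLval
        (key _ hp₀1 _ hp₀2).2.1 (key _ hp₀1 _ hp₀2).2.2
    rw [hL2] at hLtend
    exact hLtend
  refine ⟨cont2, ?_⟩
  -- Part 2: formula for f₂' and its continuity
  have hform : ∀ s ∈ Icc (0:ℝ) 1, ∀ x ∈ Icc (a s) 1,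
      f₂' s x = f₁' s (f₂ s x - x + a s) / (f₁' s (f₂ s x - x + a s) - 1) := by
    intro s hs x hx
    have ha := haI s hs
    have hcm : f₂ s x - x + a s ∈ Icc 0 (a s) := (key s hs x hx).2.1
    have hA := hf₁e s hs _ hcm
    have hder1 : HasDerivWithinAt (fun x' => f₂ s x' - x' + a s) (f₂' s x - 1) (Icc (a s) 1) x := by
      have := ((hf₂d s hs x hx).sub (hasDerivWithinAt_id x (Icc (a s) 1))).add_const (a s)
      simpa using this
    have hmaps : MapsTo (fun x' => f₂ s x' - x' + a s) (Icc (a s) 1) (Icc 0 (a s)) :=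
      fun x' hx' => (key s hs x' hx').2.1
    have hcomp := (hf₁d s hs _ hcm).comp x hder1 hmaps
    have heq : HasDerivWithinAt (f₂ s) (f₁' s (f₂ s x - x + a s) * (f₂' s x - 1))
        (Icc (a s) 1) x := by
      apply hcomp.congr (fun x' hx' => ((key s hs x' hx').2.2).symm)
        ((key s hs x hx).2.2).symm
    have hud : UniqueDiffWithinAt ℝ (Icc (a s) 1) x := (uniqueDiffOn_Icc ha.2) x hx
    have e1 := (hf₂d s hs x hx).derivWithin hud
    have e2 := heq.derivWithin hud
    have e3 := e1.symm.trans e2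
    rw [eq_div_iff (by linarith : f₁' s (f₂ s x - x + a s) - 1 ≠ 0)]
    linear_combination -e3
  have hinner : ContinuousOn (fun p : ℝ × ℝ => (p.1, f₂ p.1 p.2 - p.2 + a p.1))
      {p : ℝ × ℝ | p.1 ∈ Icc (0:ℝ) 1 ∧ p.2 ∈ Icc (a p.1) 1} :=
    (continuous_fst.continuousOn).prodMk
      ((cont2.sub continuous_snd.continuousOn).add
        (haC.comp_continuousOn continuous_fst.continuousOn))
  have hmapsK : MapsTo (fun p : ℝ × ℝ => (p.1, f₂ p.1 p.2 - p.2 + a p.1))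
      {p : ℝ × ℝ | p.1 ∈ Icc (0:ℝ) 1 ∧ p.2 ∈ Icc (a p.1) 1}
      {p : ℝ × ℝ | p.1 ∈ Icc (0:ℝ) 1 ∧ p.2 ∈ Icc 0 (a p.1)} :=
    fun p hp => ⟨hp.1, (key p.1 hp.1 p.2 hp.2).2.1⟩
  have hnum : ContinuousOn (fun p : ℝ × ℝ => f₁' p.1 (f₂ p.1 p.2 - p.2 + a p.1))
      {p : ℝ × ℝ | p.1 ∈ Icc (0:ℝ) 1 ∧ p.2 ∈ Icc (a p.1) 1} :=
    hf₁'cont.comp hinner hmapsK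
  have hne : ∀ p ∈ {p : ℝ × ℝ | p.1 ∈ Icc (0:ℝ) 1 ∧ p.2 ∈ Icc (a p.1) 1},
      f₁' p.1 (f₂ p.1 p.2 - p.2 + a p.1) - 1 ≠ 0 := by
    intro p hp
    have := hf₁e p.1 hp.1 _ (key p.1 hp.1 p.2 hp.2).2.1
    linarith
  have hG : ContinuousOn (fun p : ℝ × ℝ =>
      f₁' p.1 (f₂ p.1 p.2 - p.2 + a p.1) / (f₁' p.1 (f₂ p.1 p.2 - p.2 + a p.1) - 1))
      {p : ℝ × ℝ | p.1 ∈ Icc (0:ℝ) 1 ∧ p.2 ∈ Icc (a p.1) 1} :=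
    hnum.div (hnum.sub continuousOn_const) hne
  exact hG.congr (fun p hp => hform p.1 hp.1 p.2 hp.2)
end
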